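/- arXiv:2105.05583 — 11 statements merged into one kernel-verified Lean document; each statement's English description precedes it below -/
import Mathlib

section
/- The number of forests of rooted trees on the vertex set {1,...,n} having exactly k components equals binomial(n-1, k-1) * n^(n-k), which also equals binomial(n,k) * k * n^(n-k-1), for n >= 1 and 1 <= k <= n. -/
/-- Iterated parent map of a functional forest: `parentIter p m v` is the
`m`-fold application of the parent map `p` to `v` (as an `Option`). -/
def parentIter {n : ℕ} (p : Fin n → Option (Fin n)) : ℕ → Fin n → Option (Fin n)
  | 0, v => some v
  | m + 1, v => (parentIter p m v).bind p

/-- A parent map `p : Fin n → Option (Fin n)` encodes a forest of rooted trees on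
the vertex set `{1,…,n}` iff from every vertex, iterating the parent map
eventually reaches a root (i.e. the structure is acyclic).  The roots are the
vertices with `p v = none`, and the components (trees) of the forest correspond
bijectively to the roots. -/
def IsRootedForest {n : ℕ} (p : Fin n → Option (Fin n)) : Prop :=
  ∀ v : Fin n, ∃ m : ℕ, parentIter p m v = none

/-!
Double counting. Cutting the edge from a non-root vertex `v` to its parent `u` in a forest with
`k` trees gives a forest with `k + 1` trees in which `v` is a root and `u` lies outside the tree
of `v`; grafting the tree of `v` back below `u` inverts this. A forest with `k` trees has `n - k`
edges, and in a forest with `k + 1` trees every vertex lies outside exactly `k` of the trees, so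
`f(n,k) (n - k) = f(n,k+1) n k`. Starting from `f(n,n) = 1`, this recursion is solved by
`C(n-1,k-1) n^(n-k)`; the second form is `n C(n-1,k-1) = k C(n,k)`.
-/

open Function

section ParentIter

variable {n : ℕ} {p q : Fin n → Option (Fin n)} {m : ℕ} {v x r : Fin n}

theorem parentIter_add (p : Fin n → Option (Fin n)) (a b : ℕ) (v : Fin n) :
    parentIter p (a + b) v = (parentIter p a v).bind (parentIter p b) := by
  induction b with
  | zero => cases parentIter p a v <;> rfl
  | succ b ih =>
    change (parentIter p (a + b) v).bind p = _
    rw [ih, Option.bind_assoc]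
    rfl

theorem parentIter_succ' (p : Fin n → Option (Fin n)) (m : ℕ) (v : Fin n) :
    parentIter p (m + 1) v = (p v).bind (parentIter p m) := by
  rw [add_comm, parentIter_add]
  rfl

theorem parentIter_eq_none_of_le {m' : ℕ} (h : parentIter p m v = none) (hm : m ≤ m') :
    parentIter p m' v = none := by
  obtain ⟨d, rfl⟩ := Nat.exists_eq_add_of_le hm
  rw [parentIter_add, h]
  rfl

theorem parentIter_eq_none_of_lt {m' : ℕ} (h : parentIter p m v = some r) (hr : p r = none)
    (hm : m < m') : parentIter p m' v = none :=
  parentIter_eq_none_of_le (by simp only [parentIter, h, Option.bind_some, hr]) hm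

/-- `w` is `v` or an ancestor of `v`. -/
def Reaches (p : Fin n → Option (Fin n)) (v w : Fin n) : Prop :=
  ∃ m, parentIter p m v = some w

theorem parentIter_congr_of_forall_lt (hpq : ∀ w, w ≠ x → p w = q w)
    (h : ∀ j < m, parentIter p j v ≠ some x) : parentIter q m v = parentIter p m v := by
  induction m with
  | zero => rfl
  | succ m ih =>
    rw [parentIter, parentIter, ih fun j hj => h j (Nat.lt_succ_of_lt hj)]
    cases hm : parentIter p m v with
    | none => rfl
    | some w => exact (hpq w fun hw => h m (Nat.lt_succ_self m) (hw ▸ hm)).symm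

theorem parentIter_congr_of_not_reaches (hpq : ∀ w, w ≠ x → p w = q w) (h : ¬Reaches p v x)
    (m : ℕ) : parentIter q m v = parentIter p m v :=
  parentIter_congr_of_forall_lt hpq fun j _ hj => h ⟨j, hj⟩

theorem Reaches.of_eq_off (hpq : ∀ w, w ≠ x → p w = q w) (h : Reaches p v x) :
    Reaches q v x := by
  classical
  exact ⟨Nat.find h,
    (parentIter_congr_of_forall_lt hpq fun _ hj => Nat.find_min h hj).trans (Nat.find_spec h)⟩

theorem exists_root_of_parentIter_eq_none (h : parentIter p m v = none) :
    ∃ r, p r = none ∧ Reaches p v r := by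
  induction m generalizing v with
  | zero => cases h
  | succ m ih =>
    rw [parentIter_succ'] at h
    cases hv : p v with
    | none => exact ⟨v, hv, 0, rfl⟩
    | some w =>
      rw [hv, Option.bind_some] at h
      obtain ⟨r, hr, j, hj⟩ := ih h
      exact ⟨r, hr, j + 1, by rw [parentIter_succ', hv, Option.bind_some, hj]⟩

theorem eq_of_reaches_of_reaches {r' : Fin n} (hr : p r = none) (hr' : p r' = none)
    (h : Reaches p v r) (h' : Reaches p v r') : r = r' := by
  obtain ⟨i, hi⟩ := h
  obtain ⟨j, hj⟩ := h'
  rcases lt_trichotomy i j with hij | rfl | hij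
  · cases hj.symm.trans (parentIter_eq_none_of_lt hi hr hij)
  · exact Option.some_injective _ (hi.symm.trans hj)
  · cases hi.symm.trans (parentIter_eq_none_of_lt hj hr' hij)

end ParentIter

namespace IsRootedForest

variable {n : ℕ} {p q : Fin n → Option (Fin n)} {m : ℕ} {u v x r : Fin n}

theorem eq_zero_of_parentIter_eq_self (hp : IsRootedForest p) (h : parentIter p m v = some v) :
    m = 0 := by
  by_contra hm
  have hcycle : ∀ j, parentIter p (j * m) v = some v := by
    intro j
    induction j with
    | zero => rw [zero_mul]; rfl
    | succ j ih => rw [Nat.succ_mul, parentIter_add, ih, Option.bind_some, h]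
  obtain ⟨m₀, hm₀⟩ := hp v
  have := parentIter_eq_none_of_le hm₀ (Nat.le_mul_of_pos_right m₀ (Nat.pos_of_ne_zero hm))
  rw [hcycle] at this
  cases this

/-- Any other vertex either never passes through `x`, or does and then terminates from
there. -/
theorem of_eq_off (hp : IsRootedForest p) (hpq : ∀ w, w ≠ x → p w = q w)
    (hx : ∃ m, parentIter q m x = none) : IsRootedForest q := by
  intro v
  by_cases hvx : Reaches p v x
  · obtain ⟨j, hj⟩ := hvx.of_eq_off hpq
    obtain ⟨m, hm⟩ := hx
    exact ⟨j + m, by rw [parentIter_add, hj, Option.bind_some, hm]⟩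
  · obtain ⟨m, hm⟩ := hp v
    exact ⟨m, (parentIter_congr_of_not_reaches hpq hvx m).trans hm⟩

theorem update_none (hp : IsRootedForest p) (x : Fin n) :
    IsRootedForest (update p x none) :=
  hp.of_eq_off (fun _ hw => (update_of_ne hw _ _).symm) ⟨1, update_self _ _ _⟩

theorem update_some (hp : IsRootedForest p) (hu : ¬Reaches p u r) :
    IsRootedForest (update p r (some u)) := by
  have hpq : ∀ w, w ≠ r → p w = update p r (some u) w := fun _ hw => (update_of_ne hw _ _).symm
  obtain ⟨m, hm⟩ := hp u
  refine hp.of_eq_off hpq ⟨m + 1, ?_⟩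
  rw [parentIter_succ', update_self, Option.bind_some,
    parentIter_congr_of_not_reaches hpq hu, hm]

theorem not_reaches_update_none (hp : IsRootedForest p) (hvu : p v = some u) :
    ¬Reaches (update p v none) u v := by
  intro h
  obtain ⟨j, hj⟩ := h.of_eq_off fun w hw => update_of_ne hw _ _
  have := hp.eq_zero_of_parentIter_eq_self (m := j + 1)
    (by rw [parentIter_succ', hvu, Option.bind_some, hj])
  omega

theorem existsUnique_root (hp : IsRootedForest p) (v : Fin n) :
    ∃! r, p r = none ∧ Reaches p v r := by
  obtain ⟨_, hm⟩ := hp v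
  obtain ⟨r, hr⟩ := exists_root_of_parentIter_eq_none hm
  exact ⟨r, hr, fun _ h => eq_of_reaches_of_reaches h.1 hr.1 h.2 hr.2⟩

end IsRootedForest

theorem card_subtype_prod_of_forall_card_eq {α β : Type*} [Finite α] [Finite β]
    {Q : α → β → Prop} {c : ℕ} (h : ∀ a, Nat.card {b // Q a b} = c) :
    Nat.card {x : α × β // Q x.1 x.2} = Nat.card α * c := by
  have := Fintype.ofFinite α
  rw [Nat.card_congr (Equiv.subtypeProdEquivSigmaSubtype Q), Nat.card_sigma,
    Finset.sum_congr rfl fun a _ => h a, Finset.sum_const, smul_eq_mul, Finset.card_univ,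
    Nat.card_eq_fintype_card]

section Roots

variable {n k : ℕ} {p : Fin n → Option (Fin n)}

theorem card_parent_pairs (hk : Nat.card {v // p v = none} = k) :
    Nat.card {x : Fin n × Fin n // p x.2 = some x.1} = n - k := by
  have hbij : Bijective fun x : {x : Fin n × Fin n // p x.2 = some x.1} =>
      (⟨x.1.2, by simp [x.2]⟩ : {v // p v ≠ none}) := by
    refine ⟨fun x y hxy => ?_, fun v => ?_⟩
    · have hv : x.1.2 = y.1.2 := congrArg Subtype.val hxy
      have hu : some x.1.1 = some y.1.1 := x.2.symm.trans (hv ▸ y.2)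
      exact Subtype.ext (Prod.ext (Option.some_injective _ hu) hv)
    · obtain ⟨u, hu⟩ := Option.ne_none_iff_exists'.1 v.2
      exact ⟨⟨(u, v), hu⟩, rfl⟩
  have hcompl := Set.ncard_compl {v | p v = none}
  rw [Nat.card_fin] at hcompl
  rw [Nat.card_eq_of_bijective _ hbij, ← hk]
  exact hcompl

theorem card_roots_update_none {v : Fin n} (hv : p v ≠ none) :
    Nat.card {w // update p v none w = none} = Nat.card {w // p w = none} + 1 := by
  have hroots : {w | update p v none w = none} = insert v {w | p w = none} := by
    ext w
    by_cases hw : w = v <;> simp [hw]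
  exact (congrArg Set.ncard hroots).trans (Set.ncard_insert_of_notMem hv)

theorem IsRootedForest.card_roots_not_reaches (hp : IsRootedForest p)
    (hk : Nat.card {v // p v = none} = k + 1) (u : Fin n) :
    Nat.card {r // p r = none ∧ ¬Reaches p u r} = k := by
  obtain ⟨r₀, hr₀, huniq⟩ := hp.existsUnique_root u
  have hroots : {r | p r = none ∧ ¬Reaches p u r} = {r | p r = none} \ {r₀} := by
    ext r
    refine ⟨fun hr => ⟨hr.1, fun h => hr.2 ((h : r = r₀) ▸ hr₀.2)⟩,
      fun hr => ⟨hr.1, fun h => hr.2 (huniq r ⟨hr.1, h⟩)⟩⟩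
  calc Nat.card {r // p r = none ∧ ¬Reaches p u r}
      = ({r | p r = none} \ {r₀}).ncard := congrArg Set.ncard hroots
    _ = Nat.card {r // p r = none} - 1 :=
      Set.ncard_sdiff_singleton_of_mem (s := {r | p r = none}) hr₀.1
    _ = k := by omega

theorem eq_none_of_card_roots_eq (hn : Nat.card {v // p v = none} = n) (v : Fin n) :
    p v = none := by
  have hroots : {v | p v = none} = Set.univ :=
    (Set.eq_univ_iff_ncard _).2 (hn.trans (Nat.card_fin n).symm)
  exact Set.eq_univ_iff_forall.1 hroots v

end Roots

abbrev RootedForests (n k : ℕ) :=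
  {p : Fin n → Option (Fin n) // IsRootedForest p ∧ Nat.card {v : Fin n // p v = none} = k}

def cutEdgeEquiv (n k : ℕ) :
    {x : RootedForests n k × (Fin n × Fin n) // x.1.1 x.2.2 = some x.2.1} ≃
      {x : RootedForests n (k + 1) × (Fin n × Fin n) //
        x.1.1 x.2.2 = none ∧ ¬Reaches x.1.1 x.2.1 x.2.2} where
  toFun := fun ⟨(⟨p, hp, hk⟩, u, v), hvu⟩ =>
    ⟨(⟨update p v none, hp.update_none v, by
      rw [card_roots_update_none (p := p) (by simp [show p v = some u from hvu]), hk]⟩, u, v),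
      update_self _ _ _, hp.not_reaches_update_none hvu⟩
  invFun := fun ⟨(⟨q, hq, hk⟩, u, v), hv, hu⟩ =>
    ⟨(⟨update q v (some u), hq.update_some hu, by
      have h := card_roots_update_none (p := update q v (some u)) (v := v) (by simp)
      rw [update_idem, update_eq_self_iff.2 (show q v = none from hv).symm, hk] at h
      omega⟩, u, v), update_self _ _ _⟩
  left_inv := fun ⟨(⟨p, _, _⟩, u, v), hvu⟩ => Subtype.ext <| Prod.ext (Subtype.ext <|
    (update_idem _ _ _).trans (update_eq_self_iff.2 (show p v = some u from hvu).symm)) rfl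
  right_inv := fun ⟨(⟨q, _, _⟩, u, v), hv, _⟩ => Subtype.ext <| Prod.ext (Subtype.ext <|
    (update_idem _ _ _).trans (update_eq_self_iff.2 (show q v = none from hv).symm)) rfl

theorem card_rootedForests_mul_sub (n k : ℕ) :
    Nat.card (RootedForests n k) * (n - k) = Nat.card (RootedForests n (k + 1)) * (n * k) := by
  have hcut := card_subtype_prod_of_forall_card_eq
    fun p : RootedForests n k => card_parent_pairs p.2.2
  have hlink := card_subtype_prod_of_forall_card_eq fun q : RootedForests n (k + 1) =>
    (card_subtype_prod_of_forall_card_eq (q.2.1.card_roots_not_reaches q.2.2)).trans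
      (congrArg (· * k) (Nat.card_fin n))
  rw [← hcut, ← hlink]
  exact Nat.card_congr (cutEdgeEquiv n k)

theorem card_rootedForests_self (n : ℕ) : Nat.card (RootedForests n n) = 1 := by
  refine Nat.card_eq_one_iff_exists.2
    ⟨⟨fun _ => none, fun _ => ⟨1, rfl⟩, by simp⟩, fun ⟨p, _, hn⟩ => ?_⟩
  exact Subtype.ext (funext (eq_none_of_card_roots_eq hn))

theorem choose_mul_pow_mul_sub {n k : ℕ} (hk : 1 ≤ k) (hkn : k < n) :
    (n - 1).choose (k - 1) * n ^ (n - k) * (n - k)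
      = (n - 1).choose (k + 1 - 1) * n ^ (n - (k + 1)) * (n * k) := by
  obtain ⟨j, rfl⟩ : ∃ j, k = j + 1 := ⟨k - 1, by omega⟩
  obtain ⟨d, rfl⟩ : ∃ d, n = j + 1 + d + 1 := ⟨n - j - 2, by omega⟩
  have hchoose := Nat.choose_succ_right_eq (j + 1 + d) j
  simp only [show j + 1 + d - j = d + 1 by omega, Nat.add_sub_cancel,
    show j + 1 + d + 1 - (j + 1) = d + 1 by omega,
    show j + 1 + d + 1 - (j + 1 + 1) = d by omega] at hchoose ⊢
  rw [pow_succ]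
  linear_combination (j + 1 + d + 1) ^ d * (j + 1 + d + 1) * hchoose.symm

theorem card_rootedForests {n k : ℕ} (hk : 1 ≤ k) (hkn : k ≤ n) :
    Nat.card (RootedForests n k) = (n - 1).choose (k - 1) * n ^ (n - k) := by
  induction hkn using Nat.decreasingInduction with
  | self => simp [card_rootedForests_self]
  | of_succ k hkn ih =>
    refine Nat.eq_of_mul_eq_mul_right (Nat.sub_pos_of_lt hkn) ?_
    rw [card_rootedForests_mul_sub, ih (by omega), choose_mul_pow_mul_sub hk hkn]

theorem choose_pred_mul_pow_eq {n k : ℕ} (hk : 1 ≤ k) (hkn : k ≤ n) :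
    (((n - 1).choose (k - 1) * n ^ (n - k) : ℕ) : ℚ)
      = (n.choose k : ℚ) * k * (n : ℚ) ^ ((n : ℤ) - k - 1) := by
  obtain ⟨j, rfl⟩ : ∃ j, k = j + 1 := ⟨k - 1, by omega⟩
  obtain ⟨d, rfl⟩ : ∃ d, n = j + d + 1 := ⟨n - j - 1, by omega⟩
  have hchoose :
      ((j + d + 1 : ℕ) : ℚ) * (j + d).choose j = (j + d + 1).choose (j + 1) * (j + 1) := by
    exact_mod_cast Nat.add_one_mul_choose_eq (j + d) j
  have hn : ((j + d + 1 : ℕ) : ℚ) ≠ 0 := by positivity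
  simp only [show j + d + 1 - 1 = j + d by omega, Nat.add_sub_cancel,
    show j + d + 1 - (j + 1) = d by omega,
    show ((j + d + 1 : ℕ) : ℤ) - (j + 1 : ℕ) - 1 = d - 1 by omega]
  rw [zpow_sub_one₀ hn, zpow_natCast]
  field_simp
  push_cast at hchoose ⊢
  linear_combination ((j : ℚ) + d + 1) ^ d * hchoose

theorem forest_count_general (n k : ℕ) (hk : 1 ≤ k) (hkn : k ≤ n) :
    Nat.card {p : Fin n → Option (Fin n) //
        IsRootedForest p ∧ Nat.card {v : Fin n // p v = none} = k}
      = Nat.choose (n - 1) (k - 1) * n ^ (n - k)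
    ∧ ((Nat.choose (n - 1) (k - 1) * n ^ (n - k) : ℕ) : ℚ)
      = (Nat.choose n k : ℚ) * k * (n : ℚ) ^ ((n : ℤ) - k - 1) :=
  ⟨card_rootedForests hk hkn, choose_pred_mul_pow_eq hk hkn⟩

theorem forest_count (n k : ℕ) (hn : 1 ≤ n) (hk : 1 ≤ k) (hkn : k ≤ n) :
    Nat.card {p : Fin n → Option (Fin n) //
        IsRootedForest p ∧ Nat.card {v : Fin n // p v = none} = k}
      = Nat.choose (n - 1) (k - 1) * n ^ (n - k)
    ∧ ((Nat.choose (n - 1) (k - 1) * n ^ (n - k) : ℕ) : ℚ)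
      = (Nat.choose n k : ℚ) * k * (n : ℚ) ^ ((n : ℤ) - k - 1) :=
  forest_count_general n k hk hkn
end

section
/- Define F_{n,k}(x) = sum_{l=k}^n f_{n,l} * binomial(l,k) * x^(l-k) where f_{n,l} = binomial(n-1,l-1) n^(n-l). Then F_{n,k}(x) = binomial(n,k) * (x+k) * (x+n)^(n-k-1) for all n >= 1 and 0 <= k <= n-1. -/
/-!
`F_{n,k}(x)` is the `k`-th Taylor coefficient at `x` of the row polynomial
`∑ₗ f_{n,l} yˡ`, and by the binomial theorem that row polynomial is `y (y + n)^(n-1)`.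
So `F_{n,k}(x)` is the coefficient of `tᵏ` in `(x + t) (x + n + t)^(n-1)`; writing
`x + t = (x + n + t) - n` and using `n · C(n-1,k) = (n-k) · C(n,k)` gives the formula.
-/

/-- The forest numbers: `forestNum n l` is the number of `l`-component forests of
rooted trees on `n` labeled vertices, given by `binomial(n-1, l-1) * n^(n-l)`
for `l ≥ 1`, with the convention `forestNum n 0 = δ_{n,0}`. -/
def forestNum (n l : ℕ) : ℕ :=
  if l = 0 then (if n = 0 then 1 else 0)
  else Nat.choose (n - 1) (l - 1) * n ^ (n - l)

open Finset Polynomial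

theorem forestNum_succ_zero (m : ℕ) : forestNum (m + 1) 0 = 0 := rfl

theorem forestNum_succ_succ (m j : ℕ) :
    forestNum (m + 1) (j + 1) = m.choose j * (m + 1) ^ (m - j) := by
  simp [forestNum]

section CommSemiring

variable {R : Type*} [CommSemiring R]

theorem sum_forestNum_mul_pow (m : ℕ) (y : R) :
    ∑ l ∈ range (m + 2), (forestNum (m + 1) l : R) * y ^ l = y * (y + (m + 1 : ℕ)) ^ m := by
  rw [sum_range_succ', add_pow, mul_sum, forestNum_succ_zero, Nat.cast_zero, zero_mul, add_zero]
  refine sum_congr rfl fun j _ => ?_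
  rw [forestNum_succ_succ]
  push_cast
  ring

theorem coeff_sum_C_mul_X_add_C_pow (a : ℕ → R) (x : R) (N k : ℕ) :
    (∑ l ∈ range (N + 1), C (a l) * (X + C x) ^ l).coeff k
      = ∑ l ∈ Icc k N, a l * (l.choose k : R) * x ^ (l - k) := by
  simp only [finsetSum_coeff, coeff_C_mul, coeff_X_add_C_pow]
  refine (sum_subset_zero_on_sdiff (fun l hl => ?_) (fun l hl => ?_) fun l _ => by ring).symm
  · simp only [mem_Icc, mem_range] at hl ⊢
    omega
  · simp only [mem_sdiff, mem_range, mem_Icc] at hl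
    simp [Nat.choose_eq_zero_of_lt (show l < k by omega)]

end CommSemiring

theorem coeff_X_add_C_mul_X_add_C_pow {R : Type*} [CommRing R] (x : R) {m k : ℕ} (hk : k ≤ m) :
    ((X + C x) * (X + C (x + (m + 1 : ℕ))) ^ m).coeff k
      = ((m + 1).choose k : R) * (x + k) * (x + (m + 1 : ℕ)) ^ (m - k) := by
  set y : R := x + (m + 1 : ℕ)
  have hx : X + C x = X + C y - C ((m + 1 : ℕ) : R) := by simp [y]; ring
  have hchoose : ((m + 1 : ℕ) : R) * m.choose k = (m + 1).choose k * ((m + 1 : ℕ) - k : R) := by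
    have := congrArg (Nat.cast : ℕ → R) (Nat.choose_mul_succ_eq m k)
    push_cast [Nat.cast_sub (show k ≤ m + 1 by omega)] at this ⊢
    linear_combination this
  rw [hx, sub_mul, ← pow_succ', coeff_sub, coeff_C_mul, coeff_X_add_C_pow, coeff_X_add_C_pow,
    show m + 1 - k = m - k + 1 by omega, pow_succ]
  linear_combination (-y ^ (m - k)) * hchoose

/-- The binomial partial row-generating polynomials
`F_{n,k}(x) = ∑_{l=k}^n f_{n,l} binomial(l,k) x^(l-k)` of the forest triangle
satisfy `F_{n,k}(x) = binomial(n,k) (x+k) (x+n)^{n-k-1}` for all `n ≥ 1` and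
`0 ≤ k ≤ n-1` (as a polynomial identity, i.e. in every commutative ring). -/
theorem forest_partial_rowgen (R : Type*) [CommRing R] (n k : ℕ) (hn : 1 ≤ n)
    (hk : k ≤ n - 1) (x : R) :
    ∑ l ∈ Finset.Icc k n, (forestNum n l : R) * (Nat.choose l k : R) * x ^ (l - k)
      = (Nat.choose n k : R) * (x + (k : R)) * (x + (n : R)) ^ (n - k - 1) := by
  obtain ⟨m, rfl⟩ : ∃ m, n = m + 1 := ⟨n - 1, by omega⟩
  calc ∑ l ∈ Icc k (m + 1), (forestNum (m + 1) l : R) * (l.choose k : R) * x ^ (l - k)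
      = (∑ l ∈ range (m + 2), C (forestNum (m + 1) l : R) * (X + C x) ^ l).coeff k :=
        (coeff_sum_C_mul_X_add_C_pow _ x (m + 1) k).symm
    _ = ((X + C x) * (X + C (x + (m + 1 : ℕ))) ^ m).coeff k := by
        simp only [map_natCast, sum_forestNum_mul_pow, C_add, add_assoc]
    _ = _ := by
        rw [coeff_X_add_C_mul_X_add_C_pow x (by omega : k ≤ m), show m + 1 - k - 1 = m - k by omega]
end

section
/- Let R be a commutative ring and let A be a finite or infinite matrix over R all of whose nonzero entries lie on two consecutive diagonals (i.e., there exists d such that A_{ij} = 0 unless j - i = d or j - i = d - 1). Then every minor of A is a product of entries of A; consequently, if R is a partially ordered commutative ring and all entries of A are nonnegative, then A is totally positive (all minors are nonnegative). -/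
/-!
If `c 0 - r 0 ≥ d`, every other entry `A (r 0) (c j)` of the first row of the submatrix lies
strictly right of both diagonals; otherwise every other entry `A (r i) (c 0)` of the first column
lies strictly below them. Expanding along that row or column gives
`minor A r c = A (r 0) (c 0) * (minor of the remaining rows and columns)`, so by induction every
minor is the product of the diagonal entries `A (r i) (c i)` of its submatrix.
-/

/-- A minor of an infinite matrix `A : ℕ → ℕ → R`: the determinant of the
square submatrix obtained by selecting rows `r 0 < r 1 < ⋯` and columns
`c 0 < c 1 < ⋯`. -/
noncomputable def minor {R : Type*} [CommRing R] (A : ℕ → ℕ → R) {k : ℕ}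
    (r c : Fin k → ℕ) : R :=
  (Matrix.of fun i j => A (r i) (c j)).det

section

variable {R : Type*} [CommRing R]

def IsBidiagonal (A : ℕ → ℕ → R) (d : ℤ) : Prop :=
  ∀ i j : ℕ, (j : ℤ) - i ≠ d → (j : ℤ) - i ≠ d - 1 → A i j = 0

theorem minor_transpose (A : ℕ → ℕ → R) {k : ℕ} (r c : Fin k → ℕ) :
    minor (fun i j => A j i) c r = minor A r c := by
  rw [minor, minor, ← Matrix.det_transpose]
  rfl

theorem minor_succ_of_forall_ne_zero {A : ℕ → ℕ → R} {k : ℕ} {r c : Fin (k + 1) → ℕ}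
    (h : ∀ j ≠ 0, A (r 0) (c j) = 0) :
    minor A r c = A (r 0) (c 0) * minor A (r ∘ Fin.succ) (c ∘ Fin.succ) := by
  rw [minor, Matrix.det_succ_row_zero, Finset.sum_eq_single 0 (fun j _ hj => by simp [h j hj])
    (by simp)]
  simp only [Fin.val_zero, pow_zero, one_mul, Fin.succAbove_zero]
  rfl

theorem IsBidiagonal.minor_succ {A : ℕ → ℕ → R} {d : ℤ} (hA : IsBidiagonal A d) {k : ℕ}
    {r c : Fin (k + 1) → ℕ} (hr : StrictMono r) (hc : StrictMono c) :
    minor A r c = A (r 0) (c 0) * minor A (r ∘ Fin.succ) (c ∘ Fin.succ) := by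
  rcases le_or_gt d ((c 0 : ℤ) - r 0) with h | h
  · refine minor_succ_of_forall_ne_zero fun j hj => hA _ _ ?_ ?_ <;>
    · have := hc (Fin.pos_of_ne_zero hj)
      omega
  · rw [← minor_transpose, ← minor_transpose A]
    refine minor_succ_of_forall_ne_zero fun i hi => hA _ _ ?_ ?_ <;>
    · have := hr (Fin.pos_of_ne_zero hi)
      omega

theorem IsBidiagonal.minor_eq_prod {A : ℕ → ℕ → R} {d : ℤ} (hA : IsBidiagonal A d) {k : ℕ}
    {r c : Fin k → ℕ} (hr : StrictMono r) (hc : StrictMono c) :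
    minor A r c = ∏ i, A (r i) (c i) := by
  induction k with
  | zero => simp [minor]
  | succ k ih =>
    rw [hA.minor_succ hr hc, ih (hr.comp Fin.strictMono_succ) (hc.comp Fin.strictMono_succ),
      Fin.prod_univ_succ]
    rfl

end

/-- If all nonzero entries of a matrix `A` lie on two consecutive diagonals
(`A i j = 0` unless `j - i = d` or `j - i = d - 1`), then every minor of `A`
is a product of entries of `A`; consequently, over a partially ordered
commutative ring, if all entries of `A` are nonnegative then `A` is totally
positive (all its minors are nonnegative). -/
theorem bidiagonal_minors_and_TP
    {R : Type*} [CommRing R] {S : Type*} [CommRing S] [PartialOrder S] [IsOrderedRing S]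
    (A : ℕ → ℕ → R) (d : ℤ)
    (hA : ∀ i j : ℕ, (j : ℤ) - (i : ℤ) ≠ d → (j : ℤ) - (i : ℤ) ≠ d - 1 → A i j = 0)
    (B : ℕ → ℕ → S) (e : ℤ)
    (hB : ∀ i j : ℕ, (j : ℤ) - (i : ℤ) ≠ e → (j : ℤ) - (i : ℤ) ≠ e - 1 → B i j = 0) :
    (∀ (k : ℕ) (r c : Fin k → ℕ), StrictMono r → StrictMono c →
        (minor A r c = 0 ∨
          ∃ p : Fin k → ℕ × ℕ, minor A r c = ∏ i, A (p i).1 (p i).2))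
    ∧ ((∀ i j, 0 ≤ B i j) →
        ∀ (k : ℕ) (r c : Fin k → ℕ), StrictMono r → StrictMono c →
          0 ≤ minor B r c) := by
  have hA : IsBidiagonal A d := hA
  have hB : IsBidiagonal B e := hB
  refine ⟨fun k r c hr hc => Or.inr ⟨fun i => (r i, c i), hA.minor_eq_prod hr hc⟩,
    fun hpos k r c hr hc => ?_⟩
  rw [hB.minor_eq_prod hr hc]
  exact Finset.prod_nonneg fun i _ => hpos _ _
end

section
/- The weighted binomial matrix B_{x,y} with entries (B_{x,y})_{nk} = x^(n-k) * y^k * binomial(n,k) (for n >= k, 0 otherwise) is totally positive in the ring Z[x,y] equipped with the coefficientwise order. -/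
open MvPolynomial

/-- The weighted binomial matrix `B_{x,y}` with entries
`(B_{x,y})_{nk} = x^(n-k) y^k binomial(n,k)` (which vanish for `k > n`),
with entries in `ℤ[x,y]`; here `x = X 0` and `y = X 1`. -/
noncomputable def weightedBinomial : ℕ → ℕ → MvPolynomial (Fin 2) ℤ := fun n k =>
  if k ≤ n then (Nat.choose n k : MvPolynomial (Fin 2) ℤ) * (X 0) ^ (n - k) * (X 1) ^ k
  else 0

/-!
Multiplying column `j` of a minor of `B_{x,y}` by `x ^ c j` turns the entry `(r i, c j)` into
`x ^ r i * y ^ c j * binomial (r i) (c j)`, so up to monomial factors every minor of `B_{x,y}` is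
the corresponding integer minor of the Pascal matrix. The Pascal matrix is totally positive:
it is reached from the identity by adding each row to the one below it, one bidiagonal layer at a
time, and adding row `m - 1` to row `m` preserves total positivity because the minors involving
row `m` become sums of two old minors (one of them vanishing if row `m - 1` was already used).
-/

open Function

theorem minor_congr_rows {R : Type*} [CommRing R] {A B : ℕ → ℕ → R} {k : ℕ} {r : Fin k → ℕ}
    (c : Fin k → ℕ) (h : ∀ i, A (r i) = B (r i)) : minor A r c = minor B r c := by
  simp only [minor, h]

section TotalPositivity

variable {R : Type*} [CommRing R] [PartialOrder R]

def IsTotallyPositive (A : ℕ → ℕ → R) : Prop :=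
  ∀ (k : ℕ) (r c : Fin k → ℕ), StrictMono r → StrictMono c → 0 ≤ minor A r c

theorem IsTotallyPositive.minor_nonneg_of_monotone {A : ℕ → ℕ → R} (hA : IsTotallyPositive A)
    {k : ℕ} {r c : Fin k → ℕ} (hr : Monotone r) (hc : StrictMono c) : 0 ≤ minor A r c := by
  by_cases hinj : Injective r
  · exact hA k r c (hr.strictMono_of_injective hinj) hc
  · obtain ⟨a, b, hab, hne⟩ : ∃ a b, r a = r b ∧ a ≠ b := by
      simpa [Injective] using hinj
    rw [minor, Matrix.det_zero_of_row_eq hne (by ext j; simp [hab])]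

theorem IsTotallyPositive.update_add_prev [IsOrderedAddMonoid R] {A : ℕ → ℕ → R}
    (hA : IsTotallyPositive A) (m : ℕ) :
    IsTotallyPositive (update A m (A m + A (m - 1))) := by
  intro k r c hr hc
  by_cases hm : ∃ i, r i = m
  · obtain ⟨i, rfl⟩ := hm
    have hsplit : minor (update A (r i) (A (r i) + A (r i - 1))) r c
        = minor A r c + minor A (update r i (r i - 1)) c := by
      set M : Matrix (Fin k) (Fin k) R := .of fun a j => A (r a) (c j)
      have hnew : Matrix.of (fun a j => update A (r i) (A (r i) + A (r i - 1)) (r a) (c j))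
          = M.updateRow i (M i + fun j => A (r i - 1) (c j)) := by
        ext a j
        rcases eq_or_ne a i with rfl | ha <;> simp [M, Matrix.updateRow_apply, hr.injective.ne, *]
      have hprev : Matrix.of (fun a j => A (update r i (r i - 1) a) (c j))
          = M.updateRow i fun j => A (r i - 1) (c j) := by
        ext a j
        rcases eq_or_ne a i with rfl | ha <;> simp [M, Matrix.updateRow_apply, *]
      rw [minor, minor, minor, hnew, hprev, Matrix.det_updateRow_add, Matrix.updateRow_eq_self]
    have hmono : Monotone (update r i (r i - 1)) := by
      intro a b hab
      have := hr.monotone hab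
      simp only [update_apply]
      split_ifs with ha hb hb
      · rfl
      · subst ha; have := hr.lt_iff_lt.2 (lt_of_le_of_ne hab (Ne.symm hb)); omega
      · subst hb; have := hr.lt_iff_lt.2 (lt_of_le_of_ne hab ha); omega
      · exact this
    rw [hsplit]
    exact add_nonneg (hA k r c hr hc) (hA.minor_nonneg_of_monotone hmono hc)
  · simp only [not_exists] at hm
    rw [minor_congr_rows c fun i => update_of_ne (hm i) _ _]
    exact hA k r c hr hc

theorem IsTotallyPositive.add_prev_rows_Ico [IsOrderedAddMonoid R] {A : ℕ → ℕ → R}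
    (hA : IsTotallyPositive A) (s L : ℕ) :
    IsTotallyPositive fun n => if s ≤ n ∧ n < s + L then A n + A (n - 1) else A n := by
  induction L generalizing A with
  | zero =>
    convert hA using 2 with n
    exact if_neg (by omega)
  | succ L ih =>
    -- updating row `s + L` first leaves unchanged the rows `n - 1` added by the band `[s, s + L)`
    convert ih (hA.update_add_prev (s + L)) using 1
    ext n : 1
    rcases lt_trichotomy n (s + L) with h | rfl | h
    · have : n - 1 ≠ s + L := by omega
      simp [update_of_ne h.ne, update_of_ne this, h, show n < s + (L + 1) by omega]
    · simp
    · simp [update_of_ne h.ne', show ¬ n < s + (L + 1) by omega, show ¬ n < s + L by omega]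

theorem IsTotallyPositive.add_prev_rows [IsOrderedAddMonoid R] {A : ℕ → ℕ → R}
    (hA : IsTotallyPositive A) (s : ℕ) :
    IsTotallyPositive fun n => if s ≤ n then A n + A (n - 1) else A n := by
  intro k r c hr hc
  rw [minor_congr_rows c fun i => ?_]
  · exact hA.add_prev_rows_Ico s (Finset.univ.sup r + 1) k r c hr hc
  · have : r i ≤ Finset.univ.sup r := Finset.le_sup (Finset.mem_univ i)
    simp only [show r i < s + (Finset.univ.sup r + 1) by omega, and_true]

theorem isTotallyPositive_one [ZeroLEOneClass R] : IsTotallyPositive (1 : Matrix ℕ ℕ R) := by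
  intro k r c hr hc
  by_cases hrc : r = c
  · subst hrc
    unfold minor
    rw [show Matrix.of (fun i j => (1 : Matrix ℕ ℕ R) (r i) (r j)) = 1 from
      Matrix.submatrix_one r hr.injective, Matrix.det_one]
    exact zero_le_one
  · unfold minor
    rw [Matrix.det_apply']
    refine (Finset.sum_eq_zero fun σ _ => mul_eq_zero_of_right _ ?_).ge
    -- a nonzero term forces `r ∘ σ = c`, and strictly monotone maps are determined by their range
    obtain ⟨i, hi⟩ : ∃ i, r (σ i) ≠ c i := by
      by_contra! h
      have hcomp : r ∘ σ = c := funext h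
      exact hrc ((hr.range_inj hc).1 (by rw [← hcomp, σ.surjective.range_comp]))
    exact Finset.prod_eq_zero (Finset.mem_univ i) (by simp [Matrix.one_apply, hi])

end TotalPositivity

/-- Rows `n ≤ M` of the Pascal matrix, continued below row `M` by shifted copies of row `M`:
row `M + s` is `k ↦ binomial M (k - s)`. -/
def truncatedPascal (M n k : ℕ) : ℕ :=
  if n - M ≤ k then (min n M).choose (k - (n - M)) else 0

theorem truncatedPascal_of_le {M n : ℕ} (h : n ≤ M) (k : ℕ) :
    truncatedPascal M n k = n.choose k := by
  simp [truncatedPascal, h, Nat.sub_eq_zero_of_le h]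

theorem truncatedPascal_zero (n k : ℕ) :
    truncatedPascal 0 n k = if n = k then 1 else 0 := by
  unfold truncatedPascal
  rcases lt_trichotomy n k with h | rfl | h
  · simp [h.le, h.ne, Nat.choose_eq_zero_of_lt (Nat.sub_pos_of_lt h)]
  · simp
  · simp [h.ne', not_le.2 h]

theorem truncatedPascal_succ (M n k : ℕ) :
    truncatedPascal (M + 1) n k = if M + 1 ≤ n
      then truncatedPascal M n k + truncatedPascal M (n - 1) k else truncatedPascal M n k := by
  rcases le_or_gt n M with h | h
  · simp [truncatedPascal_of_le h, truncatedPascal_of_le (h.trans M.le_succ),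
      not_le.2 (Nat.lt_succ_of_le h)]
  obtain ⟨s, rfl⟩ := Nat.exists_eq_add_of_lt h
  simp only [truncatedPascal, Nat.add_sub_cancel, Nat.add_sub_add_right,
    show M + s + 1 - M = s + 1 by omega, show M + s - M = s by omega,
    min_eq_right (by omega : M ≤ M + s), min_eq_right (by omega : M + 1 ≤ M + s + 1),
    min_eq_right (by omega : M ≤ M + s + 1)]
  rcases lt_trichotomy k s with hk | rfl | hk
  · simp [not_le.2 hk, not_le.2 (hk.trans s.lt_succ_self)]
  · simp
  · obtain ⟨j, rfl⟩ := Nat.exists_eq_add_of_lt hk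
    simp [show s + j + 1 - s = j + 1 by omega, show s + j + 1 - (s + 1) = j by omega,
      show s ≤ s + j + 1 by omega, Nat.choose_succ_succ']

section Pascal

variable {R : Type*} [CommRing R] [PartialOrder R] [IsOrderedRing R]

theorem isTotallyPositive_truncatedPascal (M : ℕ) :
    IsTotallyPositive fun n k => (truncatedPascal M n k : R) := by
  induction M with
  | zero =>
    rw [show (fun n k => (truncatedPascal 0 n k : R)) = (1 : Matrix ℕ ℕ R) by
      funext n k
      simp [truncatedPascal_zero, Matrix.one_apply, apply_ite (Nat.cast : ℕ → R)]]
    exact isTotallyPositive_one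
  | succ M ih =>
    convert ih.add_prev_rows (M + 1) using 1
    funext n k
    simp [truncatedPascal_succ, apply_ite (Nat.cast : ℕ → R), apply_ite (fun f : ℕ → R => f k)]

theorem isTotallyPositive_choose : IsTotallyPositive fun n k => (n.choose k : R) := by
  intro k r c hr hc
  rw [minor_congr_rows c fun i => ?_]
  · exact isTotallyPositive_truncatedPascal (Finset.univ.sup r) k r c hr hc
  · ext j
    rw [truncatedPascal_of_le (Finset.le_sup (Finset.mem_univ i))]

end Pascal

theorem RingHom.map_minor {R S : Type*} [CommRing R] [CommRing S] (f : R →+* S)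
    (A : ℕ → ℕ → R) {k : ℕ} (r c : Fin k → ℕ) :
    f (minor A r c) = minor (fun n k => f (A n k)) r c := by
  rw [minor, minor, RingHom.map_det]
  rfl

theorem minor_weighted_mul_pow_sum {S : Type*} [CommRing S] (x y : S) {k : ℕ} (r c : Fin k → ℕ) :
    minor (fun n k => if k ≤ n then (n.choose k : S) * x ^ (n - k) * y ^ k else 0) r c
        * x ^ (∑ j, c j)
      = x ^ (∑ i, r i) * y ^ (∑ j, c j) * minor (fun n k => (n.choose k : S)) r c := by
  simp only [minor, ← Finset.prod_pow_eq_pow_sum]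
  rw [mul_comm, ← Matrix.det_mul_row, mul_assoc, ← Matrix.det_mul_row, ← Matrix.det_mul_column]
  congr 1
  ext i j
  simp only [Matrix.of_apply]
  split_ifs with h
  · obtain ⟨d, hd⟩ := Nat.exists_eq_add_of_le h
    rw [hd, Nat.add_sub_cancel_left]
    ring
  · simp [Nat.choose_eq_zero_of_lt (not_le.1 h)]

theorem minor_weightedBinomial_mul_monomial {k : ℕ} (r c : Fin k → ℕ) :
    minor weightedBinomial r c * monomial (Finsupp.single 0 (∑ j, c j)) 1
      = monomial (Finsupp.single 0 (∑ i, r i) + Finsupp.single 1 (∑ j, c j))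
          (minor (fun n k => (n.choose k : ℤ)) r c) := by
  have h := minor_weighted_mul_pow_sum (X 0 : MvPolynomial (Fin 2) ℤ) (X 1) r c
  have hcast : minor (fun n k => (n.choose k : MvPolynomial (Fin 2) ℤ)) r c
      = C (minor (fun n k => (n.choose k : ℤ)) r c) := by
    simp only [RingHom.map_minor, map_natCast]
  rw [hcast, X_pow_eq_monomial, X_pow_eq_monomial, X_pow_eq_monomial, monomial_mul, one_mul,
    mul_comm _ (C _), C_mul_monomial, mul_one] at h
  exact h

/-- The weighted binomial matrix `B_{x,y}` is totally positive in the ring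
`ℤ[x,y]` equipped with the coefficientwise order: every minor is a polynomial
with nonnegative coefficients. -/
theorem weightedBinomial_TP (k : ℕ) (r c : Fin k → ℕ) (hr : StrictMono r)
    (hc : StrictMono c) (d : Fin 2 →₀ ℕ) :
    0 ≤ MvPolynomial.coeff d (minor weightedBinomial r c) := by
  have hcoeff := congrArg (coeff (d + Finsupp.single 0 (∑ j, c j)))
    (minor_weightedBinomial_mul_monomial r c)
  rw [coeff_mul_monomial, mul_one, coeff_monomial] at hcoeff
  rw [hcoeff]
  split_ifs
  exacts [isTotallyPositive_choose k r c hr hc, le_rfl]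
end

section
/- Let P be a row-finite infinite matrix over a commutative ring R, with output matrix A defined by a_{nk} = (P^n)_{0k}, and let B be a lower-triangular matrix with invertible diagonal entries. Then A*B = b_{00} * O(B^{-1} P B), where O(Q) denotes the output matrix of Q, i.e. O(Q)_{nk} = (Q^n)_{0k}. -/
/-!
Solving `B C = 1` row by row, using that the `B i i` are units, shows that `C = B⁻¹` is lower
triangular as well. Both are then row-finite, so products associate and `(C P B)ⁿ = C Pⁿ B`.
Row `0` of `C` is `C₀₀ e₀`, hence `O(C P B)_{nk} = C₀₀ (Pⁿ B)_{0k}`, and `B₀₀ C₀₀ = (B C)₀₀ = 1`.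
-/

/-- Product of infinite matrices, defined via `finsum` (the sum is a genuine
finite sum whenever, e.g., the left factor is row-finite or the right factor is
column-finite). -/
noncomputable def fMul {R : Type*} [CommRing R] (P Q : ℕ → ℕ → R) : ℕ → ℕ → R :=
  fun i k => ∑ᶠ j, P i j * Q j k

/-- Powers of an infinite matrix. -/
noncomputable def fPow {R : Type*} [CommRing R] (P : ℕ → ℕ → R) : ℕ → ℕ → ℕ → R
  | 0 => fun i j => if i = j then 1 else 0
  | n + 1 => fMul (fPow P n) P

/-- The identity infinite matrix. -/
def idMat (R : Type*) [CommRing R] : ℕ → ℕ → R := fun i j => if i = j then 1 else 0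

/-- The output matrix of a production matrix `P`: `O(P)_{nk} = (P^n)_{0k}`. -/
noncomputable def outputMat {R : Type*} [CommRing R] (P : ℕ → ℕ → R) : ℕ → ℕ → R :=
  fun n k => fPow P n 0 k

section InfiniteMatrix

variable {R : Type*} [CommRing R]

def RowFinite (X : ℕ → ℕ → R) : Prop := ∀ i, (Function.support (X i)).Finite

def LowerTriangular (X : ℕ → ℕ → R) : Prop := ∀ i j, i < j → X i j = 0

lemma fMul_apply_eq_sum {X Y : ℕ → ℕ → R} {i k : ℕ} {s : Finset ℕ}
    (h : ∀ j ∉ s, X i j = 0) : fMul X Y i k = ∑ j ∈ s, X i j * Y j k :=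
  finsum_eq_finsetSum_of_support_subset _ fun j hj => by
    by_contra hjs
    exact hj (by simp only [h j hjs, zero_mul])

lemma fMul_idMat_left (X : ℕ → ℕ → R) : fMul (idMat R) X = X := by
  funext i k
  refine (finsum_eq_single _ i fun j hj => ?_).trans ?_
  · simp [idMat, Ne.symm hj]
  · simp [idMat]

lemma RowFinite.fMul {X Y : ℕ → ℕ → R} (hX : RowFinite X) (hY : RowFinite Y) :
    RowFinite (fMul X Y) := fun i =>
  ((hX i).biUnion fun j _ => hY j).subset fun k hk => by
    by_contra hk'
    refine hk (finsum_eq_zero_of_forall_eq_zero fun j => ?_)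
    by_cases hj : X i j = 0
    · rw [hj, zero_mul]
    · rw [show Y j k = 0 from by_contra fun h => hk' (Set.mem_biUnion hj h), mul_zero]

lemma fMul_assoc {X Y : ℕ → ℕ → R} (hX : RowFinite X) (hY : RowFinite Y)
    (Z : ℕ → ℕ → R) : fMul (fMul X Y) Z = fMul X (fMul Y Z) := by
  classical
  funext i l
  set S := (hX i).toFinset
  set T := S.biUnion fun j => (hY j).toFinset
  have hXS : ∀ j ∉ S, X i j = 0 := fun j hj => by simpa [S] using hj
  have hYT : ∀ j ∈ S, ∀ k ∉ T, Y j k = 0 := fun j hj k hk => by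
    by_contra h
    exact hk (Finset.mem_biUnion.2 ⟨j, hj, (hY j).mem_toFinset.2 h⟩)
  have hXYT : ∀ k ∉ T, fMul X Y i k = 0 := fun k hk => by
    rw [fMul_apply_eq_sum hXS]
    exact Finset.sum_eq_zero fun j hj => by rw [hYT j hj k hk, mul_zero]
  calc fMul (fMul X Y) Z i l = ∑ k ∈ T, (∑ j ∈ S, X i j * Y j k) * Z k l := by
        rw [fMul_apply_eq_sum hXYT]
        exact Finset.sum_congr rfl fun k _ => by rw [fMul_apply_eq_sum hXS]
    _ = ∑ j ∈ S, X i j * ∑ k ∈ T, Y j k * Z k l := by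
        simp_rw [Finset.sum_mul, Finset.mul_sum, mul_assoc]
        exact Finset.sum_comm
    _ = fMul X (fMul Y Z) i l := by
        rw [fMul_apply_eq_sum hXS]
        exact Finset.sum_congr rfl fun j hj => by rw [fMul_apply_eq_sum (hYT j hj)]

lemma LowerTriangular.rowFinite {B : ℕ → ℕ → R} (hB : LowerTriangular B) : RowFinite B :=
  fun i => (Set.finite_Iic i).subset fun j hj => not_lt.1 fun hij => hj (hB i j hij)

lemma lowerTriangular_idMat : LowerTriangular (idMat R) :=
  fun _ _ hij => if_neg hij.ne

lemma fMul_zero_apply {B : ℕ → ℕ → R} (hB : LowerTriangular B) (Y : ℕ → ℕ → R) (k : ℕ) :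
    fMul B Y 0 k = B 0 0 * Y 0 k :=
  finsum_eq_single _ 0 fun j hj => by rw [hB 0 j (Nat.pos_of_ne_zero hj), zero_mul]

lemma LowerTriangular.of_fMul_eq_idMat {B C : ℕ → ℕ → R} (hB : LowerTriangular B)
    (hdiag : ∀ i, IsUnit (B i i)) (hBC : fMul B C = idMat R) : LowerTriangular C := by
  intro i
  induction i using Nat.strong_induction_on with
  | _ i IH =>
    intro j hij
    have hdiag_mul : B i i * C i j = 0 :=
      calc B i i * C i j = ∑ l ∈ Finset.range (i + 1), B i l * C l j :=
            (Finset.sum_eq_single_of_mem (f := fun l => B i l * C l j) i (Finset.self_mem_range_succ i) fun l hl hli => by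
              have hli' := lt_of_le_of_ne (Finset.mem_range_succ_iff.1 hl) hli
              rw [IH l hli' j (hli'.trans hij), mul_zero]).symm
        _ = fMul B C i j := (fMul_apply_eq_sum fun l hl => hB i l (by simpa using hl)).symm
        _ = 0 := by rw [hBC, idMat, if_neg hij.ne]
    exact (hdiag i).mul_right_eq_zero.1 hdiag_mul

lemma RowFinite.fPow {P : ℕ → ℕ → R} (hP : RowFinite P) (n : ℕ) : RowFinite (fPow P n) := by
  induction n with
  | zero => exact lowerTriangular_idMat.rowFinite
  | succ n ih => exact ih.fMul hP

lemma fPow_conj {P B C : ℕ → ℕ → R} (hP : RowFinite P) (hB : RowFinite B)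
    (hC : RowFinite C) (hBC : fMul B C = idMat R) (hCB : fMul C B = idMat R) (n : ℕ) :
    fPow (fMul C (fMul P B)) n = fMul C (fMul (fPow P n) B) := by
  induction n with
  | zero =>
    show idMat R = fMul C (fMul (idMat R) B)
    rw [fMul_idMat_left, hCB]
  | succ n ih =>
    show fMul (fPow (fMul C (fMul P B)) n) (fMul C (fMul P B))
        = fMul C (fMul (fMul (fPow P n) P) B)
    rw [ih, fMul_assoc hC ((hP.fPow n).fMul hB), fMul_assoc (hP.fPow n) hB,
      ← fMul_assoc hB hC, hBC, fMul_idMat_left, ← fMul_assoc (hP.fPow n) hP]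

end InfiniteMatrix

/-- Production matrix of a product: if `P` is row-finite with output matrix
`A = O(P)`, and `B` is lower-triangular with invertible diagonal entries and
(two-sided) inverse `C = B⁻¹`, then `A * B = B₀₀ • O(B⁻¹ P B)`. -/
theorem production_matrix_of_product {R : Type*} [CommRing R]
    (P : ℕ → ℕ → R) (hP : ∀ i, (Function.support (P i)).Finite)
    (B C : ℕ → ℕ → R)
    (hBlt : ∀ i j, i < j → B i j = 0)
    (hBdiag : ∀ i, IsUnit (B i i))
    (hBC : fMul B C = idMat R) (hCB : fMul C B = idMat R) :
    fMul (outputMat P) B = fun n k => B 0 0 * outputMat (fMul C (fMul P B)) n k := by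
  have hB : LowerTriangular B := hBlt
  have hC : LowerTriangular C := hB.of_fMul_eq_idMat hBdiag hBC
  have hBC₀₀ : B 0 0 * C 0 0 = 1 := by
    simpa [fMul_zero_apply hB, idMat] using congrFun (congrFun hBC 0) 0
  funext n k
  show fMul (fPow P n) B 0 k = B 0 0 * fPow (fMul C (fMul P B)) n 0 k
  rw [fPow_conj hP hB.rowFinite hC.rowFinite hBC hCB, fMul_zero_apply hC, ← mul_assoc, hBC₀₀,
    one_mul]
end

section
/- Every k x k minor of the output matrix A = O(P), where a_{nk} = (P^n)_{0k}, can be written as a polynomial with nonnegative integer coefficients in the minors of size at most k of P. Consequently, if P is a row-finite or column-finite matrix over a partially ordered commutative ring and P is totally positive of order r, then the output matrix O(P) is totally positive of order r. -/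
/-- `P` is row-finite or column-finite. -/
def RowOrColFinite {R : Type*} [Zero R] (P : ℕ → ℕ → R) : Prop :=
  (∀ i, (Function.support (P i)).Finite) ∨ (∀ j, (Function.support fun i => P i j).Finite)

/-!
For `n ≥ 1` row `n` of `O(P)` is row `n - 1` times `P`, a finite sum because `P` is row- or
column-finite. So by Cauchy–Binet a minor of `O(P)` whose rows `r` are all positive is a sum, over
increasing column sets `x`, of the minor of `O(P)` on rows `r - 1` and columns `x` times the minor
of `P` on rows `x` and the original columns. If the first row is `0`, that row of `O(P)` is the
unit vector `e₀`, and the minor is either `0` or a smaller minor of `O(P)`. Induction on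
`k + ∑ rᵢ` puts every `k × k` minor of `O(P)` into the subsemiring generated by the minors of `P`
of size at most `k`, whose elements are nonnegative when those minors are.
-/

open Finset Function

namespace Matrix

variable {R : Type*} [CommRing R]

theorem det_mul_eq_sum_prod_mul_det_submatrix {n ι : Type*} [Fintype n] [DecidableEq n]
    [Fintype ι] (A : Matrix n ι R) (B : Matrix ι n R) :
    (A * B).det = ∑ p : n → ι, (∏ i, B (p i) i) * (A.submatrix id p).det := by
  simp only [det_apply', mul_apply, prod_univ_sum, mul_sum, Fintype.piFinset_univ,
    submatrix_apply, id, prod_mul_distrib]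
  rw [sum_comm]
  exact sum_congr rfl fun p _ => sum_congr rfl fun σ _ => by ring

variable {k : ℕ} {ι : Type*} [Fintype ι] [LinearOrder ι]

theorem det_mul_eq_sum_strictMono (A : Matrix (Fin k) ι R) (B : Matrix ι (Fin k) R) :
    (A * B).det = ∑ f : Fin k → ι with StrictMono f,
      (A.submatrix id f).det * (B.submatrix f id).det := by
  set term : (Fin k → ι) → R := fun p => (∏ i, B (p i) i) * (A.submatrix id p).det
  have h_inj : ∑ p, term p = ∑ p : Fin k → ι with Function.Injective p, term p := by
    refine (sum_filter_of_ne fun p _ hp => ?_).symm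
    by_contra hp_inj
    obtain ⟨i, j, hpij, hij⟩ := Function.not_injective_iff.mp hp_inj
    refine hp (mul_eq_zero_of_right _ (det_zero_of_column_eq hij fun _ => ?_))
    simp [hpij]
  -- An injective `p` factors uniquely as `f ∘ σ` with `f` strictly increasing: `f` is `p` sorted.
  have h_reindex : ∑ p : Fin k → ι with Function.Injective p, term p =
      ∑ x ∈ ({f | StrictMono f} : Finset (Fin k → ι)) ×ˢ (univ : Finset (Equiv.Perm (Fin k))),
        term (x.1 ∘ x.2) := by
    refine sum_nbij' (fun p => (p ∘ Tuple.sort p, (Tuple.sort p)⁻¹)) (fun x => x.1 ∘ x.2)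
      ?_ ?_ ?_ ?_ fun p _ => ?_
    · intro p hp
      simp only [mem_filter, mem_univ, true_and] at hp
      simp only [mem_filter, mem_product, mem_univ, true_and, and_true]
      exact (Tuple.monotone_sort p).strictMono_of_injective (hp.comp (Tuple.sort p).injective)
    · rintro ⟨f, σ⟩ hx
      simp only [mem_filter, mem_product, mem_univ, true_and, and_true] at hx ⊢
      exact hx.injective.comp σ.injective
    · intro p hp
      ext i
      simp
    · rintro ⟨f, σ⟩ hx
      simp only [mem_filter, mem_product, mem_univ, true_and, and_true] at hx
      have h_sorted : (f ∘ σ) ∘ Tuple.sort (f ∘ σ) = f := by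
        rw [Tuple.comp_perm_comp_sort_eq_comp_sort,
          Tuple.sort_eq_refl_iff_monotone.mpr hx.monotone]
        rfl
      refine Prod.ext h_sorted (inv_eq_of_mul_eq_one_left ?_)
      exact Equiv.ext fun i => hx.injective (congrFun h_sorted i)
    · simp [Function.comp_assoc]
  rw [det_mul_eq_sum_prod_mul_det_submatrix, h_inj, h_reindex, sum_product]
  refine sum_congr rfl fun f _ => ?_
  simp only [term, Function.comp_apply]
  have h_perm (σ : Equiv.Perm (Fin k)) : (A.submatrix id (f ∘ σ)).det =
      Equiv.Perm.sign σ * (A.submatrix id f).det := det_permute' σ (A.submatrix id f)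
  simp only [h_perm, det_apply' (B.submatrix f id), submatrix_apply, id, mul_sum]
  exact sum_congr rfl fun σ _ => by ring

end Matrix

theorem Subsemiring.exists_sum_prod_of_mem_closure {R : Type*} [CommSemiring R] {s : Set R}
    {x : R} (hx : x ∈ closure s) :
    ∃ (N : ℕ) (M : Fin N → ℕ) (g : (t : Fin N) → Fin (M t) → R),
      (∀ t u, g t u ∈ s) ∧ x = ∑ t, ∏ u, g t u := by
  obtain ⟨l, hl, rfl⟩ := AddSubmonoid.exists_list_of_mem_closure (mem_closure_iff.mp hx)
  choose L hL hprod using fun t : Fin l.length =>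
    Submonoid.exists_list_of_mem_closure (hl _ (l.getElem_mem t.isLt))
  refine ⟨l.length, fun t => (L t).length, fun t u => (L t)[u.1],
    fun t u => hL t _ (List.getElem_mem _), ?_⟩
  simp only [Fin.prod_univ_getElem, hprod, Fin.sum_univ_getElem]

def minorsOfSizeLE {R : Type*} [CommRing R] (P : ℕ → ℕ → R) (k : ℕ) : Set R :=
  {x | ∃ m ≤ k, ∃ r c : Fin m → ℕ, StrictMono r ∧ StrictMono c ∧ minor P r c = x}

section OutputMatrix

variable {R : Type*} [CommRing R] (P : ℕ → ℕ → R)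

theorem minorsOfSizeLE_mono {k l : ℕ} (hkl : k ≤ l) : minorsOfSizeLE P k ⊆ minorsOfSizeLE P l :=
  fun _ ⟨m, hm, hx⟩ => ⟨m, hm.trans hkl, hx⟩

theorem finite_support_fPow (hP : ∀ i, (support (P i)).Finite) (n i : ℕ) :
    (support (fPow P n i)).Finite := by
  induction n generalizing i with
  | zero => exact (Set.finite_singleton i).subset fun j hj => by by_contra h; simp_all [fPow]
  | succ n ih =>
    refine ((ih i).biUnion fun j _ => hP j).subset fun x hx => ?_
    by_contra hx'
    refine hx (finsum_eq_zero_of_forall_eq_zero fun j => ?_)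
    by_contra hj
    exact hx' (Set.mem_biUnion (left_ne_zero_of_mul hj) (right_ne_zero_of_mul hj))

theorem finite_support_fPow_mul (hP : RowOrColFinite P) (n i c : ℕ) :
    (support fun x => fPow P n i x * P x c).Finite :=
  hP.elim (fun h => (finite_support_fPow P h n i).subset (support_mul_subset_left _ _))
    (fun h => (h c).subset (support_mul_subset_right _ _))

theorem exists_fPow_succ_eq_sum_fin (hP : RowOrColFinite P) {α β : Type*} [Finite α] [Finite β]
    (i : ℕ) (n : α → ℕ) (c : β → ℕ) :
    ∃ L : ℕ, ∀ a b, fPow P (n a + 1) i (c b) = ∑ x : Fin L, fPow P (n a) i x * P x (c b) := by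
  have hfin : (⋃ a, ⋃ b, support fun x => fPow P (n a) i x * P x (c b)).Finite :=
    Set.finite_iUnion fun a => Set.finite_iUnion fun b => finite_support_fPow_mul P hP _ _ _
  obtain ⟨L, hL⟩ := hfin.bddAbove
  refine ⟨L + 1, fun a b => ?_⟩
  rw [Fin.sum_univ_eq_sum_range (fun x => fPow P (n a) i x * P x (c b))]
  refine finsum_eq_sum_of_support_subset _ fun x hx => ?_
  exact mem_range.2 (Nat.lt_succ_of_le (hL (Set.mem_iUnion₂.2 ⟨a, b, hx⟩)))

theorem exists_minor_outputMat_succ_eq_sum (hP : RowOrColFinite P) {k : ℕ} (n c : Fin k → ℕ) :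
    ∃ L : ℕ, minor (outputMat P) (fun a => n a + 1) c =
      ∑ f : Fin k → Fin L with StrictMono f,
        minor (outputMat P) n (Fin.val ∘ f) * minor P (Fin.val ∘ f) c := by
  obtain ⟨L, hL⟩ := exists_fPow_succ_eq_sum_fin P hP 0 n c
  have h_mul : (Matrix.of fun a b => outputMat P (n a + 1) (c b)) =
      Matrix.of (fun a (x : Fin L) => outputMat P (n a) x) *
        Matrix.of fun (x : Fin L) b => P x (c b) := by
    ext a b
    exact hL a b
  refine ⟨L, ?_⟩
  rw [minor, h_mul, Matrix.det_mul_eq_sum_strictMono]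
  rfl

theorem minor_outputMat_of_head_eq_zero {k : ℕ} {r c : Fin (k + 1) → ℕ} (hr : r 0 = 0)
    (hc : StrictMono c) : minor (outputMat P) r c =
      if c 0 = 0 then minor (outputMat P) (r ∘ Fin.succ) (c ∘ Fin.succ) else 0 := by
  have h_row (j : ℕ) : outputMat P (r 0) j = if j = 0 then 1 else 0 := by
    simp [hr, outputMat, fPow, eq_comm]
  rw [minor, Matrix.det_succ_row_zero, Fintype.sum_eq_single 0]
  · split_ifs with hc0 <;> simp [h_row, hc0, minor, Matrix.submatrix]
  · intro j hj
    have hcj : c j ≠ 0 := ((Nat.zero_le _).trans_lt (hc (Fin.pos_of_ne_zero hj))).ne'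
    simp [h_row, hcj]

theorem minor_outputMat_mem_closure (hP : RowOrColFinite P) {k : ℕ} (r c : Fin k → ℕ)
    (hr : StrictMono r) (hc : StrictMono c) :
    minor (outputMat P) r c ∈ Subsemiring.closure (minorsOfSizeLE P k) := by
  match k with
  | 0 => simp [minor]
  | k + 1 =>
    by_cases hr0 : r 0 = 0
    · rw [minor_outputMat_of_head_eq_zero P hr0 hc]
      split_ifs
      · exact Subsemiring.closure_mono (minorsOfSizeLE_mono P k.le_succ)
          (minor_outputMat_mem_closure hP _ _ (hr.comp Fin.strictMono_succ)
            (hc.comp Fin.strictMono_succ))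
      · exact Subsemiring.zero_mem _
    · obtain ⟨n, rfl⟩ : ∃ n : Fin (k + 1) → ℕ, r = fun a => n a + 1 :=
        ⟨fun a => r a - 1, funext fun a => (Nat.sub_add_cancel
          ((Nat.pos_of_ne_zero hr0).trans_le (hr.monotone (Fin.zero_le a)))).symm⟩
      obtain ⟨L, hL⟩ := exists_minor_outputMat_succ_eq_sum P hP n c
      rw [hL]
      refine Subsemiring.sum_mem _ fun f hf => ?_
      have hf : StrictMono (Fin.val ∘ f) := Fin.val_strictMono.comp (mem_filter.1 hf).2
      exact Subsemiring.mul_mem _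
        (minor_outputMat_mem_closure hP n _ (fun a b hab => by simpa using hr hab) hf)
        (Subsemiring.subset_closure ⟨k + 1, le_rfl, _, c, hf, hc, rfl⟩)
termination_by k + ∑ a, r a
decreasing_by
  · rw [Fin.sum_univ_succ r]
    simp only [Function.comp_apply]
    omega
  · subst r
    simp [sum_add_distrib]

end OutputMatrix

/-- (i) Every `k × k` minor of the output matrix `O(P)` can be written as a sum
of products of minors of size `≤ k` of the production matrix `P` (in particular,
as a polynomial with nonnegative integer coefficients in those minors).
(ii) Consequently, if `Q` is a row-finite or column-finite matrix over a
partially ordered commutative ring that is totally positive of order `ρ`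
(all minors of size `≤ ρ` are nonnegative), then its output matrix `O(Q)` is
also totally positive of order `ρ`. -/
theorem output_matrix_minors_and_TP {R : Type*} [CommRing R]
    {S : Type*} [CommRing S] [PartialOrder S] [IsOrderedRing S]
    (P : ℕ → ℕ → R) (hP : RowOrColFinite P)
    (Q : ℕ → ℕ → S) (hQ : RowOrColFinite Q) (ρ : ℕ∞)
    (hTP : ∀ (k : ℕ), (k : ℕ∞) ≤ ρ → ∀ (r c : Fin k → ℕ),
      StrictMono r → StrictMono c → 0 ≤ minor Q r c) :
    (∀ (k : ℕ) (r c : Fin k → ℕ), StrictMono r → StrictMono c →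
      ∃ (N : ℕ) (M : Fin N → ℕ) (sz : (t : Fin N) → Fin (M t) → ℕ)
        (row col : (t : Fin N) → (s : Fin (M t)) → Fin (sz t s) → ℕ),
        (∀ t s, sz t s ≤ k ∧ StrictMono (row t s) ∧ StrictMono (col t s)) ∧
        minor (outputMat P) r c = ∑ t, ∏ s, minor P (row t s) (col t s))
    ∧ (∀ (k : ℕ), (k : ℕ∞) ≤ ρ → ∀ (r c : Fin k → ℕ),
        StrictMono r → StrictMono c → 0 ≤ minor (outputMat Q) r c) := by
  refine ⟨fun k r c hr hc => ?_, fun k hk r c hr hc => ?_⟩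
  · obtain ⟨N, M, g, hg, hsum⟩ :=
      Subsemiring.exists_sum_prod_of_mem_closure (minor_outputMat_mem_closure P hP r c hr hc)
    choose sz hsz row col hrow hcol hg using hg
    exact ⟨N, M, sz, row, col, fun t s => ⟨hsz t s, hrow t s, hcol t s⟩, by simp only [hsum, hg]⟩
  · have h_nonneg : minorsOfSizeLE Q k ⊆ Subsemiring.nonneg S := by
      rintro _ ⟨m, hm, r, c, hr, hc, rfl⟩
      exact hTP m ((Nat.cast_le.2 hm).trans hk) r c hr hc
    exact Subsemiring.closure_le.2 h_nonneg (minor_outputMat_mem_closure Q hQ r c hr hc)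
end

section
/- Abel inverse relation: for sequences (a_n) and (b_n) in a commutative Q-algebra, a_n = sum_{j=0}^n binomial(n,j) (-j)^(n-j) b_j for all n if and only if b_n = sum_{j=0}^n binomial(n,j) * j * n^(n-j-1) * a_j for all n. -/
/-!
Both sides are lower triangular transforms, with kernels `N n k = C(n,k) (-k)^(n-k)` and
`M k j = C(k,j) · abelCoeff k j`, so it suffices that `N` and `M` are mutually inverse. For
`j < n` one has `C(n,k) C(k,j) = C(n,j) C(n-j,k-j)` and `(-k)^(n-k) · abelCoeff k j =
(-1)^(n-k) j k^(n-j-1)`, so `(N M) n j` is `C(n,j) j` times the `(n-j)`-th forward difference of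
`x ↦ x^(n-j-1)` at `j`, which vanishes. Then `M N = 1` as well, because truncating triangular
kernels gives square matrices, where a left inverse is a right inverse.
-/

/-- The Abel coefficient `j·n^{n-j-1}`, interpreted as `1` when `j = n`
(including `n = 0`). -/
noncomputable def abelCoeff (n j : ℕ) : ℚ :=
  if j = n then 1 else (j : ℚ) * (n : ℚ) ^ (n - j - 1)

open Finset

theorem sum_range_choose_mul_neg_one_pow_mul_add_pow_eq_zero {R : Type*} [CommRing R]
    (x : R) {r m : ℕ} (h : r < m) :
    ∑ i ∈ range (m + 1), (m.choose i : R) * (-1) ^ (m - i) * (x + i) ^ r = 0 := by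
  have := congrFun (fwdDiff_iter_pow_eq_zero_of_lt (R := R) h) x
  rw [fwdDiff_iter_eq_sum_shift] at this
  simpa [zsmul_eq_mul, mul_comm] using this

section TriangularKernel

variable {K : Type*} [CommRing K] {P Q : ℕ → ℕ → K}

theorem sum_range_mul_eq_ite_comm (hQ : ∀ n k, n < k → Q n k = 0)
    (hQP : ∀ n k, ∑ j ∈ range (n + 1), Q n j * P j k = if k = n then 1 else 0) (n k : ℕ) :
    ∑ j ∈ range (n + 1), P n j * Q j k = if k = n then 1 else 0 := by
  rcases lt_or_ge n k with hnk | hkn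
  · rw [if_neg hnk.ne']
    exact sum_eq_zero fun j hj => by rw [hQ j k (by grind), mul_zero]
  let A : Matrix (Fin (n + 1)) (Fin (n + 1)) K := .of fun p q => P p q
  let B : Matrix (Fin (n + 1)) (Fin (n + 1)) K := .of fun p q => Q p q
  have hBA : B * A = 1 := by
    ext p q
    have htrunc : ∑ j ∈ range (n + 1), Q p j * P j q = ∑ j ∈ range (p + 1), Q p j * P j q :=
      (sum_subset (range_subset_range.mpr p.isLt) fun j _ hj => by
        rw [hQ p j (by grind), zero_mul]).symm
    simp only [Matrix.mul_apply, Matrix.one_apply, Matrix.of_apply, A, B, Fin.ext_iff]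
    rw [Fin.sum_univ_eq_sum_range (fun j => Q p j * P j q), htrunc, hQP]
    exact if_congr eq_comm rfl rfl
  have hAB : A * B = 1 := mul_eq_one_comm.mp hBA
  have := congrArg (fun M => M ⟨n, n.lt_succ_self⟩ ⟨k, Nat.lt_succ_of_le hkn⟩) hAB
  simp only [Matrix.mul_apply, Matrix.one_apply, Matrix.of_apply, A, B, Fin.ext_iff] at this
  rw [← Fin.sum_univ_eq_sum_range (fun j => P n j * Q j k), this]
  exact if_congr eq_comm rfl rfl

theorem eq_sum_range_of_sum_range_mul_eq_ite {R : Type*} [Semiring R] [Algebra K R]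
    (hP : ∀ n k, n < k → P n k = 0)
    (hQP : ∀ n k, ∑ j ∈ range (n + 1), Q n j * P j k = if k = n then 1 else 0)
    {a b : ℕ → R} (h : ∀ n, b n = ∑ k ∈ range (n + 1), algebraMap K R (P n k) * a k) (n : ℕ) :
    a n = ∑ j ∈ range (n + 1), algebraMap K R (Q n j) * b j := by
  have hextend : ∀ j ∈ range (n + 1), ∑ k ∈ range (j + 1), algebraMap K R (P j k) * a k =
      ∑ k ∈ range (n + 1), algebraMap K R (P j k) * a k := fun j hj =>
    sum_subset (range_subset_range.mpr (by grind)) fun k _ hk => by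
      rw [hP j k (by grind), map_zero, zero_mul]
  symm
  calc ∑ j ∈ range (n + 1), algebraMap K R (Q n j) * b j
      = ∑ j ∈ range (n + 1), algebraMap K R (Q n j) *
          ∑ k ∈ range (n + 1), algebraMap K R (P j k) * a k :=
        sum_congr rfl fun j hj => by rw [h j, hextend j hj]
    _ = ∑ k ∈ range (n + 1), algebraMap K R (∑ j ∈ range (n + 1), Q n j * P j k) * a k := by
        simp_rw [mul_sum, map_sum, sum_mul, map_mul, mul_assoc]
        exact sum_comm
    _ = a n := by simp [hQP]

end TriangularKernel

noncomputable def abelKernel (n j : ℕ) : ℚ := n.choose j * abelCoeff n j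

noncomputable def abelInverseKernel (n j : ℕ) : ℚ := n.choose j * (-(j : ℚ)) ^ (n - j)

theorem abelKernel_eq_zero_of_lt {n j : ℕ} (h : n < j) : abelKernel n j = 0 := by
  simp [abelKernel, Nat.choose_eq_zero_of_lt h]

theorem abelInverseKernel_eq_zero_of_lt {n j : ℕ} (h : n < j) : abelInverseKernel n j = 0 := by
  simp [abelInverseKernel, Nat.choose_eq_zero_of_lt h]

theorem neg_pow_mul_abelCoeff {j k n : ℕ} (hjk : j ≤ k) (hkn : k ≤ n) (hjn : j < n) :
    (-(k : ℚ)) ^ (n - k) * abelCoeff k j = (-1) ^ (n - k) * j * (k : ℚ) ^ (n - j - 1) := by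
  rw [neg_pow]
  rcases hjk.eq_or_lt with rfl | hjk
  · rw [abelCoeff, if_pos rfl, ← mul_pow_sub_one (by omega : n - j ≠ 0) (j : ℚ)]
    ring
  · rw [abelCoeff, if_neg hjk.ne, show n - j - 1 = (n - k) + (k - j - 1) by omega, pow_add]
    ring

theorem abelInverseKernel_mul_abelKernel_add {j m i : ℕ} (hi : i ≤ m + 1) :
    abelInverseKernel (j + m + 1) (j + i) * abelKernel (j + i) j =
      (j + m + 1).choose j * j * ((m + 1).choose i * (-1) ^ (m + 1 - i) * ((j : ℚ) + i) ^ m) := by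
  have hchoose := Nat.choose_mul (n := j + m + 1) (k := j + i) (Nat.le_add_right j i)
  rw [show j + m + 1 - j = m + 1 by omega, Nat.add_sub_cancel_left] at hchoose
  have hcoeff := neg_pow_mul_abelCoeff (Nat.le_add_right j i) (by omega : j + i ≤ j + m + 1)
    (by omega : j < j + m + 1)
  rw [show j + m + 1 - (j + i) = m + 1 - i by omega, show j + m + 1 - j - 1 = m by omega]
    at hcoeff
  calc abelInverseKernel (j + m + 1) (j + i) * abelKernel (j + i) j
      = ((j + m + 1).choose (j + i) * (j + i).choose j : ℕ) *
          ((-((j + i : ℕ) : ℚ)) ^ (j + m + 1 - (j + i)) * abelCoeff (j + i) j) := by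
        simp only [abelInverseKernel, abelKernel]; push_cast; ring
    _ = _ := by
        rw [hchoose, show j + m + 1 - (j + i) = m + 1 - i by omega, hcoeff]
        push_cast; ring

theorem sum_abelInverseKernel_mul_abelKernel (n j : ℕ) :
    ∑ k ∈ range (n + 1), abelInverseKernel n k * abelKernel k j = if j = n then 1 else 0 := by
  rcases lt_or_ge j n with hjn | hnj
  · obtain ⟨m, rfl⟩ := Nat.exists_eq_add_of_lt hjn
    rw [if_neg hjn.ne, show j + m + 1 + 1 = j + (m + 1 + 1) by omega, sum_range_add,
      sum_eq_zero fun k hk => by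
        rw [abelKernel_eq_zero_of_lt (mem_range.mp hk), mul_zero], zero_add,
      sum_congr rfl fun i hi => abelInverseKernel_mul_abelKernel_add (mem_range_succ_iff.mp hi),
      ← mul_sum, sum_range_choose_mul_neg_one_pow_mul_add_pow_eq_zero _ m.lt_succ_self, mul_zero]
  · rw [sum_range_succ, sum_eq_zero fun k hk => by
      rw [abelKernel_eq_zero_of_lt (by grind), mul_zero], zero_add]
    rcases hnj.eq_or_lt with rfl | hnj
    · simp [abelInverseKernel, abelKernel, abelCoeff]
    · rw [abelKernel_eq_zero_of_lt hnj, mul_zero, if_neg hnj.ne']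

/-- Abel inverse relation: for sequences `(a_n)`, `(b_n)` in a commutative
`ℚ`-algebra, `a_n = ∑_{j=0}^n binomial(n,j)(-j)^{n-j} b_j` for all `n` iff
`b_n = ∑_{j=0}^n binomial(n,j)·j·n^{n-j-1} a_j` for all `n` (with
`j·n^{n-j-1}` interpreted as `1` when `j = n`). -/
theorem abel_inverse_relation {R : Type*} [CommRing R] [Algebra ℚ R]
    (a b : ℕ → R) :
    (∀ n : ℕ, a n = ∑ j ∈ Finset.range (n + 1),
        algebraMap ℚ R ((Nat.choose n j : ℚ) * (-(j : ℚ)) ^ (n - j)) * b j)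
    ↔ (∀ n : ℕ, b n = ∑ j ∈ Finset.range (n + 1),
        algebraMap ℚ R ((Nat.choose n j : ℚ) * abelCoeff n j) * a j) := by
  have hMN := sum_range_mul_eq_ite_comm (fun _ _ => abelInverseKernel_eq_zero_of_lt)
    sum_abelInverseKernel_mul_abelKernel
  exact ⟨eq_sum_range_of_sum_range_mul_eq_ite (fun _ _ => abelInverseKernel_eq_zero_of_lt) hMN,
    eq_sum_range_of_sum_range_mul_eq_ite (fun _ _ => abelKernel_eq_zero_of_lt)
      sum_abelInverseKernel_mul_abelKernel⟩
end

section
/- Cauchy's identity: for all integers N >= 0 and k >= 1, sum_{l=0}^N binomial(N,l) * (1-k-l)^(N-l) * (k+l)^l = sum_{l=0}^N binomial(N,l) * l!. -/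
/-!
Expanding `(1 - x - l)^(N - l) = (1 - (x + l))^(N - l)` binomially and collecting terms by the total
degree `j`, the identity `C(N, l) C(N - l, j - l) = C(N, j) C(j, l)` turns the left-hand side into
`∑_j C(N, j) ∑_{l ≤ j} (-1)^(j - l) C(j, l) (x + l)^j`. The inner sum is the `j`-th forward
difference of `t ↦ t^j`, which is `j!`.
-/

open Finset
open scoped Nat

section

variable {R : Type*} [CommRing R]

theorem sum_neg_one_pow_mul_choose_mul_add_pow_self (x : R) (j : ℕ) :
    ∑ l ∈ range (j + 1), (-1) ^ (j - l) * (j.choose l : R) * (x + l) ^ j = j ! := by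
  have h := fwdDiff_iter_eq_sum_shift (h := (1 : R)) (fun t : R ↦ t ^ j) j x
  rw [fwdDiff_iter_eq_factorial] at h
  simpa [zsmul_eq_mul] using h.symm

theorem choose_mul_one_sub_pow_mul_pow (x : R) {N l : ℕ} (hl : l ≤ N) :
    (N.choose l : R) * (1 - x - l) ^ (N - l) * (x + l) ^ l =
      ∑ j ∈ Ico l (N + 1), (N.choose j : R) * ((-1) ^ (j - l) * j.choose l * (x + l) ^ j) := by
  have binomial : (1 - x - l) ^ (N - l) =
      ∑ m ∈ range (N - l + 1), (-1) ^ m * (x + l) ^ m * ((N - l).choose m : R) := by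
    rw [show 1 - x - l = -(x + l) + 1 by ring, add_pow]
    refine sum_congr rfl fun m _ ↦ ?_
    rw [one_pow, mul_one, neg_pow]
  rw [binomial, sum_Ico_eq_sum_range, show N + 1 - l = N - l + 1 by omega, mul_sum, sum_mul]
  refine sum_congr rfl fun m _ ↦ ?_
  have hchoose : (N.choose (l + m) : R) * (l + m).choose l = N.choose l * (N - l).choose m := by
    rw [← Nat.cast_mul, ← Nat.cast_mul, Nat.choose_mul (Nat.le_add_right l m),
      Nat.add_sub_cancel_left]
  rw [Nat.add_sub_cancel_left, pow_add]
  linear_combination -(-1) ^ m * (x + l) ^ l * (x + l) ^ m * hchoose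

theorem sum_choose_mul_one_sub_pow_mul_pow (x : R) (N : ℕ) :
    ∑ l ∈ range (N + 1), (N.choose l : R) * (1 - x - l) ^ (N - l) * (x + l) ^ l =
      ∑ l ∈ range (N + 1), (N.choose l : R) * l ! := by
  calc _ = ∑ l ∈ range (N + 1), ∑ j ∈ Ico l (N + 1),
          (N.choose j : R) * ((-1) ^ (j - l) * j.choose l * (x + l) ^ j) :=
        sum_congr rfl fun l hl ↦ choose_mul_one_sub_pow_mul_pow x (by grind)
    _ = ∑ j ∈ range (N + 1), ∑ l ∈ range (j + 1),
          (N.choose j : R) * ((-1) ^ (j - l) * j.choose l * (x + l) ^ j) := by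
        simpa only [Nat.Ico_zero_eq_range] using sum_Ico_Ico_comm 0 (N + 1) _
    _ = _ := by
        simp only [← mul_sum, sum_neg_one_pow_mul_choose_mul_add_pow_self]

end

theorem cauchy_identity_general (N k : ℕ) :
    ∑ l ∈ Finset.range (N + 1),
        (Nat.choose N l : ℤ) * (1 - (k : ℤ) - (l : ℤ)) ^ (N - l) * ((k : ℤ) + l) ^ l
      = ∑ l ∈ Finset.range (N + 1), (Nat.choose N l : ℤ) * (Nat.factorial l : ℤ) :=
  sum_choose_mul_one_sub_pow_mul_pow (k : ℤ) N

/-- Cauchy's identity: for all integers `N ≥ 0` and `k ≥ 1`,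
`∑_{l=0}^N binomial(N,l)(1-k-l)^{N-l}(k+l)^l = ∑_{l=0}^N binomial(N,l)·l!`
(an identity in `ℤ`). -/
theorem cauchy_identity (N k : ℕ) (hk : 1 ≤ k) :
    ∑ l ∈ Finset.range (N + 1),
        (Nat.choose N l : ℤ) * (1 - (k : ℤ) - (l : ℤ)) ^ (N - l) * ((k : ℤ) + l) ^ l
      = ∑ l ∈ Finset.range (N + 1), (Nat.choose N l : ℤ) * (Nat.factorial l : ℤ) :=
  cauchy_identity_general N k
end

section
/- Let P_n(x;a,b) = x * prod_{i=1}^{n-1} (x + i*a + (n-i)*b) for n >= 1 and P_0 = 1, polynomials in Z[x,a,b]. Then the sequence (P_n) is of binomial type: P_n(x+y; a, b) = sum_{k=0}^n binomial(n,k) P_k(x;a,b) P_{n-k}(y;a,b) in Z[x,y,a,b]. -/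
open MvPolynomial

/-- The Schläfli–Gessel–Seo polynomials
`P_n(x;a,b) = x ∏_{i=1}^{n-1} (x + i·a + (n-i)·b)` for `n ≥ 1`, `P_0 = 1`,
evaluated at elements `x, a, b` of a commutative ring. -/
def sgsPoly {R : Type*} [CommRing R] (n : ℕ) (x a b : R) : R :=
  if n = 0 then 1
  else x * ∏ i ∈ Finset.Icc 1 (n - 1), (x + (i : R) * a + ((n - i : ℕ) : R) * b)

/-! The shift identity `P_{n+1}(x+a) - P_{n+1}(x+b) = (n+1)(a-b) P_n(x+a+b)`, combined with
`(k+1) C(n+1,k+1) = (n+1) C(n,k)`, gives the same identity for the defect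
`D_n(x) = P_n(x+y) - ∑ C(n,k) P_k(x) P_{n-k}(y)`. If `D_n = 0`, then `D_{n+1}(x+a) = D_{n+1}(x+b)`:
as a polynomial in `x`, `D_{n+1}` is periodic with period `a - b` and vanishes at `0`, so over a
domain of characteristic zero with `a ≠ b` it has the infinitely many roots `k(a-b)`, hence is
zero. -/

theorem Polynomial.eq_zero_of_periodic {R : Type*} [CommRing R] [IsDomain R] [CharZero R]
    {p : Polynomial R} {c : R} (hc : c ≠ 0) (hper : Function.Periodic p.eval c)
    (h0 : p.IsRoot 0) : p = 0 :=
  p.eq_zero_of_infinite_isRoot <| Set.infinite_of_injective_forall_mem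
    ((mul_left_injective₀ hc).comp Nat.cast_injective) fun k => (hper.nat_mul_eq k).trans h0

section SchlafliGesselSeo

variable {R : Type*} [CommRing R]

theorem sgsPoly_zero (x a b : R) : sgsPoly 0 x a b = 1 := rfl

theorem sgsPoly_succ (n : ℕ) (x a b : R) :
    sgsPoly (n + 1) x a b
      = x * ∏ i ∈ Finset.range n, (x + ((i + 1 : ℕ) : R) * a + ((n - i : ℕ) : R) * b) := by
  rw [sgsPoly, if_neg n.succ_ne_zero, Nat.add_sub_cancel, ← Finset.Ico_add_one_right_eq_Icc,
    Finset.prod_Ico_eq_prod_range, Nat.add_sub_cancel]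
  refine congrArg (x * ·) (Finset.prod_congr rfl fun i _ => ?_)
  rw [add_comm 1 i, Nat.add_sub_add_right]

theorem sgsPoly_zero_left {n : ℕ} (hn : n ≠ 0) (a b : R) : sgsPoly n 0 a b = 0 := by
  obtain ⟨m, rfl⟩ := Nat.exists_eq_succ_of_ne_zero hn
  rw [sgsPoly_succ, zero_mul]

theorem map_sgsPoly {S : Type*} [CommRing S] (f : R →+* S) (n : ℕ) (x a b : R) :
    f (sgsPoly n x a b) = sgsPoly n (f x) (f a) (f b) := by
  cases n with
  | zero => simp [sgsPoly_zero]
  | succ n => simp [sgsPoly_succ, map_prod]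

theorem sgsPoly_succ_add_sub_add (n : ℕ) (x a b : R) :
    sgsPoly (n + 1) (x + a) a b - sgsPoly (n + 1) (x + b) a b
      = ((n + 1 : ℕ) : R) * (a - b) * sgsPoly n (x + a + b) a b := by
  cases n with
  | zero => simp [sgsPoly_succ, sgsPoly_zero]
  | succ m =>
    set d : ℕ → R := fun i => x + ((i + 2 : ℕ) : R) * a + ((m + 1 - i : ℕ) : R) * b
    have hsub : ∀ i ∈ Finset.range m, ((m + 1 - i : ℕ) : R) = ((m - i : ℕ) : R) + 1 :=
      fun i hi => by rw [Nat.sub_add_comm (Finset.mem_range.mp hi).le, Nat.cast_succ]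
    have hprod_a : ∏ i ∈ Finset.range (m + 1),
          (x + a + ((i + 1 : ℕ) : R) * a + ((m + 1 - i : ℕ) : R) * b)
        = (∏ i ∈ Finset.range m, d i) * (x + ((m + 2 : ℕ) : R) * a + b) := by
      rw [Finset.prod_range_succ, Nat.add_sub_cancel_left]
      refine congrArg₂ _ (Finset.prod_congr rfl fun i _ => ?_) ?_
      · simp only [d]; push_cast; ring
      · push_cast; ring
    have hprod_b : ∏ i ∈ Finset.range (m + 1),
          (x + b + ((i + 1 : ℕ) : R) * a + ((m + 1 - i : ℕ) : R) * b)
        = (∏ i ∈ Finset.range m, d i) * (x + a + ((m + 1 : ℕ) : R) * b + b) := by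
      rw [Finset.prod_range_succ']
      refine congrArg₂ _ (Finset.prod_congr rfl fun i hi => ?_) ?_
      · simp only [d, Nat.add_sub_add_right, hsub i hi]; push_cast; ring
      · push_cast; ring
    have hprod_ab : ∏ i ∈ Finset.range m, (x + a + b + ((i + 1 : ℕ) : R) * a + ((m - i : ℕ) : R) * b)
        = ∏ i ∈ Finset.range m, d i :=
      Finset.prod_congr rfl fun i hi => by simp only [d, hsub i hi]; push_cast; ring
    rw [sgsPoly_succ, sgsPoly_succ, sgsPoly_succ, hprod_a, hprod_b, hprod_ab]
    -- the three products share `∏ d i`; what is left is `(x+a)(x+(m+2)a+b) - (x+b)(x+a+(m+2)b) = (m+2)(a-b)(x+a+b)`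
    push_cast
    ring

theorem choose_mul_sgsPoly_succ_add_sub_add (m k : ℕ) (x a b : R) :
    ((m + 1).choose (k + 1) : R) * (sgsPoly (k + 1) (x + a) a b - sgsPoly (k + 1) (x + b) a b)
      = ((m + 1 : ℕ) : R) * (a - b) * ((m.choose k : R) * sgsPoly k (x + a + b) a b) := by
  have hchoose : ((m + 1).choose (k + 1) : R) * ((k + 1 : ℕ) : R)
      = ((m + 1 : ℕ) : R) * m.choose k := by
    rw [← Nat.cast_mul, ← Nat.cast_mul, Nat.add_one_mul_choose_eq]
  rw [sgsPoly_succ_add_sub_add]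
  linear_combination (a - b) * sgsPoly k (x + a + b) a b * hchoose

def sgsBinomialDefect (n : ℕ) (x y a b : R) : R :=
  sgsPoly n (x + y) a b
    - ∑ k ∈ Finset.range (n + 1), (n.choose k : R) * sgsPoly k x a b * sgsPoly (n - k) y a b

theorem map_sgsBinomialDefect {S : Type*} [CommRing S] (f : R →+* S) (n : ℕ) (x y a b : R) :
    f (sgsBinomialDefect n x y a b) = sgsBinomialDefect n (f x) (f y) (f a) (f b) := by
  simp [sgsBinomialDefect, map_sgsPoly]

theorem sgsBinomialDefect_zero_left (n : ℕ) (y a b : R) : sgsBinomialDefect n 0 y a b = 0 := by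
  rw [sgsBinomialDefect, Finset.sum_eq_single 0
    (fun k _ hk => by rw [sgsPoly_zero_left hk]; ring) (by simp)]
  simp [sgsPoly_zero]

theorem sgsBinomialDefect_succ_add_sub_add (m : ℕ) (x y a b : R) :
    sgsBinomialDefect (m + 1) (x + a) y a b - sgsBinomialDefect (m + 1) (x + b) y a b
      = ((m + 1 : ℕ) : R) * (a - b) * sgsBinomialDefect m (x + a + b) y a b := by
  have hsum : ∑ k ∈ Finset.range (m + 2),
        ((m + 1).choose k : R) * sgsPoly k (x + a) a b * sgsPoly (m + 1 - k) y a b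
      - ∑ k ∈ Finset.range (m + 2),
        ((m + 1).choose k : R) * sgsPoly k (x + b) a b * sgsPoly (m + 1 - k) y a b
      = ((m + 1 : ℕ) : R) * (a - b) * ∑ k ∈ Finset.range (m + 1),
          (m.choose k : R) * sgsPoly k (x + a + b) a b * sgsPoly (m - k) y a b := by
    rw [Finset.sum_range_succ' _ (m + 1), Finset.sum_range_succ' _ (m + 1), sgsPoly_zero,
      sgsPoly_zero, add_sub_add_right_eq_sub, ← Finset.sum_sub_distrib, Finset.mul_sum]
    refine Finset.sum_congr rfl fun k _ => ?_
    rw [Nat.add_sub_add_right]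
    linear_combination sgsPoly (m - k) y a b * choose_mul_sgsPoly_succ_add_sub_add m k x a b
  have hlead : sgsPoly (m + 1) (x + a + y) a b - sgsPoly (m + 1) (x + b + y) a b
      = ((m + 1 : ℕ) : R) * (a - b) * sgsPoly m (x + a + b + y) a b := by
    rw [show x + a + y = x + y + a by ring, show x + b + y = x + y + b by ring,
      show x + a + b + y = x + y + a + b by ring]
    exact sgsPoly_succ_add_sub_add m (x + y) a b
  simp only [sgsBinomialDefect]
  linear_combination hlead - hsum

theorem sgsBinomialDefect_eq_zero [IsDomain R] [CharZero R] {a b : R} (hab : a ≠ b)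
    (n : ℕ) (x y : R) : sgsBinomialDefect n x y a b = 0 := by
  induction n generalizing x y with
  | zero => simp [sgsBinomialDefect, sgsPoly_zero]
  | succ m ih =>
    let p : Polynomial R := sgsBinomialDefect (m + 1) Polynomial.X (Polynomial.C y)
      (Polynomial.C a) (Polynomial.C b)
    have heval (z : R) : p.eval z = sgsBinomialDefect (m + 1) z y a b := by
      simpa using map_sgsBinomialDefect (Polynomial.evalRingHom z) (m + 1) Polynomial.X
        (Polynomial.C y) (Polynomial.C a) (Polynomial.C b)
    have hper : Function.Periodic p.eval (a - b) := fun z => by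
      have hshift := sgsBinomialDefect_succ_add_sub_add m (z - b) y a b
      rw [ih, mul_zero, sub_eq_zero, sub_add_cancel, show z - b + a = z + (a - b) by ring]
        at hshift
      simpa only [heval] using hshift
    have hp : p = 0 := Polynomial.eq_zero_of_periodic (sub_ne_zero.mpr hab) hper
      (by rw [Polynomial.IsRoot, heval, sgsBinomialDefect_zero_left])
    rw [← heval, hp, Polynomial.eval_zero]

end SchlafliGesselSeo

/-- The Rothe–Pfaff–Schläfli identity: the Schläfli–Gessel–Seo polynomials form
a sequence of binomial type, i.e. in `ℤ[x,y,a,b]` (with `x = X 0`, `y = X 1`,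
`a = X 2`, `b = X 3`),
`P_n(x+y;a,b) = ∑_{k=0}^n binomial(n,k) P_k(x;a,b) P_{n-k}(y;a,b)`. -/
theorem sgs_binomial_type (n : ℕ) :
    sgsPoly n ((X 0 : MvPolynomial (Fin 4) ℤ) + X 1) (X 2) (X 3)
      = ∑ k ∈ Finset.range (n + 1),
          (Nat.choose n k : MvPolynomial (Fin 4) ℤ)
            * sgsPoly k (X 0) (X 2) (X 3) * sgsPoly (n - k) (X 1) (X 2) (X 3) :=
  sub_eq_zero.mp <| sgsBinomialDefect_eq_zero ((X_injective (R := ℤ)).ne (by decide)) n _ _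
end

section
/- Define f*_{n,k}(q) = q^(k(k-1)/2) * qbinom(n-1,k-1) * ([n]_q)^(n-k) for n >= 1 (and f*_{0,k} = delta_{k0}), where [n]_q = 1+q+...+q^(n-1) and qbinom denotes the Gaussian binomial coefficient. Then sum_{k=0}^n f*_{n,k}(q) x^k = x * prod_{i=1}^{n-1} (q^i x + [n]_q) in Z[q,x], for all n >= 1. -/
open MvPolynomial

/-- The `q`-integer `[n]_q = 1 + q + ⋯ + q^{n-1}`. -/
def qInt {R : Type*} [CommRing R] (q : R) (n : ℕ) : R :=
  ∑ i ∈ Finset.range n, q ^ i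

/-- The Gaussian binomial coefficient `qbinom(n,k)`, defined by the `q`-Pascal
recurrence `qbinom(n+1,k+1) = qbinom(n,k) + q^{k+1}·qbinom(n,k+1)` with
`qbinom(n,0) = 1` and `qbinom(0,k+1) = 0`. -/
def qChoose {R : Type*} [CommRing R] (q : R) : ℕ → ℕ → R
  | _, 0 => 1
  | 0, _ + 1 => 0
  | n + 1, k + 1 => qChoose q n k + q ^ (k + 1) * qChoose q n (k + 1)

/-- The modified `q`-forest numbers
`f*_{n,k}(q) = q^{k(k-1)/2} qbinom(n-1,k-1) ([n]_q)^{n-k}` for `n ≥ 1`, `k ≥ 1`,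
with `f*_{n,0} = 0` for `n ≥ 1` (the lower index `k-1 = -1` of the Gaussian
binomial being out of range). -/
def qForest {R : Type*} [CommRing R] (q : R) (n k : ℕ) : R :=
  if k = 0 then 0
  else q ^ (k * (k - 1) / 2) * qChoose q (n - 1) (k - 1) * (qInt q n) ^ (n - k)

/-!
The row generating function is `x` times Rothe's `q`-binomial theorem
`∏_{j<m} (a + q^j x) = ∑_j q^{C(j,2)} qbinom(m,j) a^{m-j} x^j`, taken at `m = n-1`,
`a = [n]_q` and `x ↦ q x`. Rothe's theorem follows by induction on `m` from
`P_{m+1}(x) = (a + x) P_m(q x)` and the `q`-Pascal recurrence.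
-/

open Finset

section

variable {R : Type*} [CommRing R] (q : R)

@[simp]
theorem qChoose_zero_right (n : ℕ) : qChoose q n 0 = 1 := by
  cases n <;> rfl

theorem qChoose_succ_succ (n k : ℕ) :
    qChoose q (n + 1) (k + 1) = qChoose q n k + q ^ (k + 1) * qChoose q n (k + 1) :=
  rfl

theorem qChoose_eq_zero_of_lt : ∀ {n k : ℕ}, n < k → qChoose q n k = 0
  | 0, _ + 1, _ => rfl
  | n + 1, k + 1, h => by
    rw [qChoose_succ_succ, qChoose_eq_zero_of_lt (by omega), qChoose_eq_zero_of_lt (by omega),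
      mul_zero, add_zero]

theorem prod_add_pow_mul_eq_sum_qChoose (a x : R) (m : ℕ) :
    ∏ j ∈ range m, (a + q ^ j * x) =
      ∑ j ∈ range (m + 1), q ^ j.choose 2 * qChoose q m j * a ^ (m - j) * x ^ j := by
  induction m generalizing x with
  | zero => simp
  | succ m ih =>
    set F : ℕ → R := fun j => q ^ j.choose 2 * qChoose q m j * a ^ (m - j) * (q * x) ^ j
    have hshift : ∏ j ∈ range (m + 1), (a + q ^ j * x) = (a + x) * ∑ j ∈ range (m + 1), F j := by
      rw [prod_range_succ', ← ih (q * x), pow_zero, one_mul, mul_comm]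
      exact congrArg _ (prod_congr rfl fun j _ => by ring)
    have hx : x * ∑ j ∈ range (m + 1), F j =
        ∑ j ∈ range (m + 1), q ^ (j + 1).choose 2 * qChoose q m j * a ^ (m - j) * x ^ (j + 1) := by
      rw [mul_sum]
      refine sum_congr rfl fun j _ => ?_
      rw [Nat.choose_succ_succ', Nat.choose_one_right]
      ring
    have ha : a * ∑ j ∈ range (m + 1), F j = a ^ (m + 1) +
        ∑ j ∈ range (m + 1),
          q ^ (j + 1).choose 2 * (q ^ (j + 1) * qChoose q m (j + 1)) * a ^ (m - j) * x ^ (j + 1) := by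
      have htop : F (m + 1) = 0 := by simp [F, qChoose_eq_zero_of_lt]
      rw [← add_zero (∑ j ∈ range (m + 1), F j), ← htop, ← sum_range_succ, sum_range_succ',
        mul_add, mul_sum, add_comm]
      congr 1
      · simp [F, pow_succ, mul_comm]
      refine sum_congr rfl fun j hj => ?_
      rcases Nat.lt_succ_iff_lt_or_eq.1 (mem_range.1 hj) with hjm | rfl
      · rw [show m - j = m - (j + 1) + 1 by omega]
        ring
      · simp [F, qChoose_eq_zero_of_lt]
    rw [hshift, add_mul, ha, hx, sum_range_succ' _ (m + 1)]
    simp only [qChoose_succ_succ, qChoose_zero_right, mul_add, add_mul, sum_add_distrib,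
      Nat.choose_zero_succ, Nat.add_sub_add_right, Nat.sub_zero, pow_zero, mul_one, one_mul]
    ring

theorem qForest_succ_succ (m k : ℕ) :
    qForest q (m + 1) (k + 1) = q ^ (k + 1).choose 2 * qChoose q m k * qInt q (m + 1) ^ (m - k) := by
  simp [qForest, Nat.choose_two_right]

theorem sum_qForest_mul_pow (x : R) (m : ℕ) :
    ∑ k ∈ range (m + 2), qForest q (m + 1) k * x ^ k =
      x * ∏ j ∈ range m, (q ^ (j + 1) * x + qInt q (m + 1)) :=
  calc ∑ k ∈ range (m + 2), qForest q (m + 1) k * x ^ k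
      = x * ∑ j ∈ range (m + 1),
          q ^ j.choose 2 * qChoose q m j * qInt q (m + 1) ^ (m - j) * (q * x) ^ j := by
        rw [sum_range_succ', show qForest q (m + 1) 0 = 0 from if_pos rfl, zero_mul, add_zero,
          mul_sum]
        refine sum_congr rfl fun j _ => ?_
        rw [qForest_succ_succ, Nat.choose_succ_succ', Nat.choose_one_right]
        ring
    _ = x * ∏ j ∈ range m, (q ^ (j + 1) * x + qInt q (m + 1)) := by
        rw [← prod_add_pow_mul_eq_sum_qChoose]
        exact congrArg _ (prod_congr rfl fun j _ => by ring)

end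

/-- The `q`-Abel evaluation of the modified `q`-forest numbers: in `ℤ[q,x]`
(with `q = X 0`, `x = X 1`), for all `n ≥ 1`,
`∑_{k=0}^n f*_{n,k}(q) x^k = x ∏_{i=1}^{n-1} (q^i x + [n]_q)`. -/
theorem qforest_rowgen (n : ℕ) (hn : 1 ≤ n) :
    ∑ k ∈ Finset.range (n + 1),
        qForest (X 0 : MvPolynomial (Fin 2) ℤ) n k * (X 1) ^ k
      = (X 1 : MvPolynomial (Fin 2) ℤ)
          * ∏ i ∈ Finset.Icc 1 (n - 1), ((X 0) ^ i * (X 1) + qInt (X 0) n) := by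
  obtain ⟨m, rfl⟩ : ∃ m, n = m + 1 := ⟨n - 1, by omega⟩
  rw [sum_qForest_mul_pow, Nat.add_sub_cancel, ← Ico_add_one_right_eq_Icc, prod_Ico_eq_prod_range,
    Nat.add_sub_cancel]
  simp only [add_comm 1]
end

section
/- Let G(t) = (e^(wT(t)) - 1)/w in Q[w][[t]], where T(t) is the tree function satisfying T(t) = t e^(T(t)). Then G(t) = sum_{n>=1} (w+n)^(n-1) t^n / n!. -/
/-!
Write `E = e^{wT} = ∑ Eₙ(w) tⁿ`. The Euler operator `θ = t d/dt` gives `θE = w E θT`, where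
`θT = ∑ nⁿ tⁿ/n!` has no constant term, so this recursion determines `E` from `E₀ = 1`.
The coefficients `Aₙ(w)/n!`, with `A₀ = 1` and the Abel polynomials `Aₙ(w) = w (w + n)^(n-1)`,
satisfy the same recursion: multiplied by `n!` it reads
`n Aₙ = w ∑_{k<n} C(n,k) (n-k)^(n-k) A_k`, which is Abel's identity
`∑_k C(n,k) (n-k)^(n-k) A_k = (w + n)ⁿ`. That identity follows by induction on `n`, comparing
derivatives via `A_k' (w) = k A_{k-1}(w + 1)` and values at `w = 0`. Hence `Eₙ = Aₙ/n!`, and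
dividing by `w` gives the claim.
-/

open PowerSeries Polynomial

/-- The tree function `T(t) = ∑_{n≥1} n^{n-1} t^n/n!`, viewed in `ℚ[w][[t]]`
(its coefficients are the constant polynomials `n^{n-1}/n!`).  It satisfies
`T = t·e^T`. -/
noncomputable def treeFunW : PowerSeries (Polynomial ℚ) :=
  PowerSeries.mk fun n =>
    if n = 0 then 0 else Polynomial.C ((n : ℚ) ^ (n - 1) / (Nat.factorial n : ℚ))

open scoped Nat

namespace Polynomial

variable {R : Type*} [CommRing R]

noncomputable def abelPoly : ℕ → R[X]
  | 0 => 1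
  | k + 1 => X * (X + C ((k + 1 : ℕ) : R)) ^ k

@[simp] lemma abelPoly_zero : abelPoly 0 = (1 : R[X]) := rfl

lemma abelPoly_succ (k : ℕ) :
    abelPoly (k + 1) = (X * (X + C ((k + 1 : ℕ) : R)) ^ k : R[X]) := rfl

lemma eval_zero_abelPoly_succ (k : ℕ) : (abelPoly (k + 1) : R[X]).eval 0 = 0 := by
  simp [abelPoly_succ]

lemma derivative_abelPoly_succ (k : ℕ) :
    derivative (abelPoly (k + 1) : R[X]) = (k + 1 : R[X]) * (abelPoly k).comp (X + 1) := by
  cases k with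
  | zero => simp [abelPoly_succ]
  | succ j =>
    simp only [abelPoly_succ, derivative_mul, derivative_X, derivative_pow, derivative_X_add_C,
      mul_comp, pow_comp, X_comp, add_comp, C_comp, Nat.add_sub_cancel]
    simp only [Nat.cast_add, Nat.cast_one, map_add, map_one, map_natCast]
    ring

variable [IsAddTorsionFree R]

lemma eq_of_derivative_eq {p q : R[X]} (hd : derivative p = derivative q)
    (h0 : p.eval 0 = q.eval 0) : p = q := by
  have hconst := eq_C_of_derivative_eq_zero (p := p - q) (by rw [derivative_sub, hd, sub_self])
  rwa [coeff_zero_eq_eval_zero, eval_sub, h0, sub_self, map_zero, sub_eq_zero] at hconst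

theorem sum_choose_mul_abelPoly (n : ℕ) :
    ∑ k ∈ Finset.range (n + 1), C ((n.choose k * (n - k) ^ (n - k) : ℕ) : R) * abelPoly k
      = (X + C (n : R)) ^ n := by
  induction n with
  | zero => simp
  | succ n ih =>
    refine eq_of_derivative_eq ?_ ?_
    · rw [Finset.sum_range_succ', derivative_add, derivative_sum]
      simp only [derivative_C_mul, derivative_abelPoly_succ, abelPoly_zero, derivative_one,
        mul_zero, add_zero, Nat.succ_sub_succ]
      calc _ = (n + 1 : R[X]) * (∑ k ∈ Finset.range (n + 1),
              C ((n.choose k * (n - k) ^ (n - k) : ℕ) : R) * abelPoly k).comp (X + 1) := by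
            rw [sum_comp, Finset.mul_sum]
            refine Finset.sum_congr rfl fun k _ => ?_
            have hchoose : ((n + 1).choose (k + 1) * (k + 1) : R[X]) = (n + 1) * n.choose k := by
              exact_mod_cast congrArg (Nat.cast : ℕ → R[X]) (Nat.add_one_mul_choose_eq n k).symm
            simp only [mul_comp, natCast_comp, pow_comp, Nat.cast_mul, Nat.cast_pow, map_mul,
              map_pow, map_natCast]
            linear_combination
              ((n - k : ℕ) : R[X]) ^ (n - k) * (abelPoly k).comp (X + 1) * hchoose
        _ = derivative ((X + C ((n + 1 : ℕ) : R)) ^ (n + 1)) := by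
            rw [ih, derivative_pow, derivative_X_add_C]
            simp only [pow_comp, add_comp, X_comp, natCast_comp, Nat.cast_add, Nat.cast_one,
              map_add, map_one, map_natCast, Nat.add_sub_cancel]
            ring
    · rw [eval_finsetSum, Finset.sum_range_succ']
      simp [eval_zero_abelPoly_succ]

theorem X_mul_sum_range_choose_mul_abelPoly (n : ℕ) :
    X * ∑ k ∈ Finset.range n, C ((n.choose k * (n - k) ^ (n - k) : ℕ) : R) * abelPoly k
      = (n : R[X]) * abelPoly n := by
  have h := sum_choose_mul_abelPoly (R := R) n
  rw [Finset.sum_range_succ, Nat.choose_self, Nat.sub_self, pow_zero, mul_one, Nat.cast_one,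
    map_one, one_mul] at h
  rw [eq_sub_of_add_eq h]
  cases n with
  | zero => simp
  | succ k =>
    simp only [abelPoly_succ, Nat.cast_add, Nat.cast_one, map_add, map_one, map_natCast]
    ring

end Polynomial

namespace PowerSeries

lemma coeff_X_mul_derivative {A : Type*} [CommRing A] (f : A⟦X⟧) (n : ℕ) :
    coeff n (X * d⁄dX A f) = n * coeff n f := by
  cases n with
  | zero => simp
  | succ n => rw [coeff_succ_X_mul, coeff_derivative, mul_comm]; push_cast; rfl

lemma eq_of_X_mul_derivative_eq_mul {A : Type*} [CommRing A] [IsAddTorsionFree A]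
    {f g h : A⟦X⟧} (hh : constantCoeff h = 0) (hf : X * d⁄dX A f = f * h)
    (hg : X * d⁄dX A g = g * h) (h0 : constantCoeff f = constantCoeff g) : f = g := by
  rw [← sub_eq_zero]
  have hd : X * d⁄dX A (f - g) = (f - g) * h := by
    rw [map_sub, mul_sub, sub_mul, hf, hg]
  have hd0 : constantCoeff (f - g) = 0 := by rw [map_sub, h0, sub_self]
  generalize f - g = D at hd hd0
  ext n
  induction n using Nat.strong_induction_on with
  | _ n ih =>
    rcases n with _ | n
    · simpa using hd0
    have hn := congrArg (coeff (n + 1)) hd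
    rw [coeff_X_mul_derivative, coeff_mul, Finset.sum_eq_zero] at hn
    · rw [map_zero]
      exact nsmul_right_injective (Nat.succ_ne_zero n) (by simpa [nsmul_eq_mul] using hn)
    rintro ⟨i, _ | j⟩ hij
    · simp [hh]
    · rw [Finset.HasAntidiagonal.mem_antidiagonal] at hij
      rw [ih i (by omega), map_zero, zero_mul]

variable {A : Type*} [CommRing A] [Algebra ℚ A]

lemma X_mul_derivative_exp_subst {f : A⟦X⟧} (hf : constantCoeff f = 0) :
    X * d⁄dX A ((exp A).subst f) = (exp A).subst f * (X * d⁄dX A f) := by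
  rw [derivative_subst (HasSubst.of_constantCoeff_zero' hf), derivative_exp]
  ring

lemma coeff_exp_subst {f : A⟦X⟧} (hf : constantCoeff f = 0) (n : ℕ) :
    coeff n ((exp A).subst f)
      = ∑ m ∈ Finset.range (n + 1), algebraMap ℚ A (m ! : ℚ)⁻¹ * coeff n (f ^ m) := by
  rw [coeff_subst' (HasSubst.of_constantCoeff_zero' hf),
    finsum_eq_sum_of_support_subset (s := Finset.range (n + 1))]
  · simp [coeff_exp, smul_eq_mul]
  refine Function.support_subset_iff'.2 fun m hm => ?_
  rw [Finset.coe_range, Set.mem_Iio, not_lt, Nat.succ_le_iff] at hm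
  rw [coeff_of_lt_order n ((Nat.cast_lt.2 hm).trans_le
    (le_order_pow_of_constantCoeff_eq_zero m hf)), smul_zero]

end PowerSeries

noncomputable def abelPolyEGF : ℚ[X]⟦X⟧ :=
  PowerSeries.mk fun n => Polynomial.C (n ! : ℚ)⁻¹ * abelPoly n

lemma constantCoeff_treeFunW : constantCoeff treeFunW = 0 := by
  simp [treeFunW]

lemma X_mul_derivative_abelPolyEGF :
    PowerSeries.X * d⁄dX ℚ[X] abelPolyEGF
      = abelPolyEGF * (PowerSeries.X * d⁄dX ℚ[X] (PowerSeries.C Polynomial.X * treeFunW)) := by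
  ext n : 1
  rw [PowerSeries.coeff_X_mul_derivative, PowerSeries.coeff_mul,
    Finset.Nat.sum_antidiagonal_eq_sum_range_succ_mk, Finset.sum_range_succ]
  simp only [PowerSeries.coeff_X_mul_derivative, PowerSeries.coeff_C_mul, abelPolyEGF,
    PowerSeries.coeff_mk, treeFunW, Nat.sub_self]
  rw [Nat.cast_zero, zero_mul, mul_zero, add_zero, mul_left_comm,
    ← X_mul_sum_range_choose_mul_abelPoly, Finset.mul_sum, Finset.mul_sum]
  refine Finset.sum_congr rfl fun k hk => ?_
  obtain ⟨j, rfl⟩ : ∃ j, n = k + (j + 1) :=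
    ⟨n - k - 1, by rw [Finset.mem_range] at hk; omega⟩
  rw [Nat.add_sub_cancel_left, if_neg (Nat.succ_ne_zero j), Nat.add_sub_cancel]
  have hq : ((k + (j + 1))! : ℚ)⁻¹ * (((k + (j + 1)).choose k * (j + 1) ^ (j + 1) : ℕ) : ℚ)
      = (k ! : ℚ)⁻¹ * ((j + 1 : ℕ) * ((j + 1 : ℕ) ^ j / (j + 1)! : ℚ)) := by
    rw [Nat.cast_mul, Nat.cast_choose ℚ (Nat.le_add_right k (j + 1)), Nat.add_sub_cancel_left]
    field_simp
    push_cast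
    ring
  have hC := congrArg (fun q => Polynomial.C q * (Polynomial.X * abelPoly k)) hq
  simp only [map_mul, map_natCast] at hC
  rw [map_natCast]
  linear_combination hC

lemma exp_subst_C_X_mul_treeFunW :
    (exp ℚ[X]).subst (PowerSeries.C Polynomial.X * treeFunW) = abelPolyEGF := by
  have hT : constantCoeff (PowerSeries.C Polynomial.X * treeFunW) = 0 := by
    simp [constantCoeff_treeFunW]
  refine eq_of_X_mul_derivative_eq_mul (by simp) (X_mul_derivative_exp_subst hT)
    X_mul_derivative_abelPolyEGF ?_
  rw [← coeff_zero_eq_constantCoeff_apply, coeff_exp_subst hT,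
    ← coeff_zero_eq_constantCoeff_apply]
  simp [abelPolyEGF]

/-- Let `G(t) = (e^{wT(t)} - 1)/w := ∑_{m≥1} w^{m-1} T(t)^m / m!` in
`ℚ[w][[t]]`, where `T` is the tree function.  Then
`G(t) = ∑_{n≥1} (w+n)^{n-1} t^n/n!`; i.e., for every `n ≥ 1`, the `n`-th
coefficient `∑_{m=1}^n w^{m-1}·[t^n](T^m)/m!` of `G` (the sum may be truncated
at `m = n` since `[t^n](T^m) = 0` for `m > n`) equals `(w+n)^{n-1}/n!`. -/
theorem expWT_coeff (n : ℕ) (hn : 1 ≤ n) :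
    ∑ m ∈ Finset.Icc 1 n,
        (Polynomial.X : Polynomial ℚ) ^ (m - 1)
          * Polynomial.C ((Nat.factorial m : ℚ))⁻¹
          * PowerSeries.coeff n (treeFunW ^ m)
      = Polynomial.C ((Nat.factorial n : ℚ))⁻¹
          * ((Polynomial.X : Polynomial ℚ) + Polynomial.C (n : ℚ)) ^ (n - 1) := by
  obtain ⟨k, rfl⟩ := Nat.exists_eq_add_of_le' hn
  have hcoeff := congrArg (PowerSeries.coeff (k + 1)) exp_subst_C_X_mul_treeFunW
  rw [coeff_exp_subst (by simp [constantCoeff_treeFunW]), Finset.sum_range_succ', pow_zero,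
    PowerSeries.coeff_one, if_neg k.succ_ne_zero, mul_zero, add_zero, abelPolyEGF, coeff_mk,
    abelPoly_succ] at hcoeff
  apply mul_left_cancel₀ (Polynomial.X_ne_zero (R := ℚ))
  rw [Nat.add_sub_cancel, mul_left_comm, ← hcoeff, Finset.mul_sum,
    ← Finset.Ico_add_one_right_eq_Icc, Finset.sum_Ico_eq_sum_range, Nat.add_sub_cancel]
  refine Finset.sum_congr rfl fun m _ => ?_
  rw [add_comm 1 m, mul_pow, ← map_pow, PowerSeries.coeff_C_mul, Polynomial.algebraMap_eq,
    Nat.add_sub_cancel]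
  ring
end
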